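/- arXiv:1307.1169 — 10 statements merged into one kernel-verified Lean document; each statement's English description precedes it below -/
import Mathlib

section
/- Let ℓ : ZMod n → ℝ be an injective function (cylindrical semi-bar lengths in cyclic order), and define a graph G on ZMod n where i and j are adjacent iff going around the cycle from i to j in at least one of the two directions, at most k intermediate vertices t satisfy ℓ(t) > min(ℓ(i), ℓ(j)). Then for n ≥ 2k+2, G has exactly (k+1)(2n−2k−3) edges, and for n ≤ 2k+2, G is the complete graph with n(n−1)/2 edges. -/
/-!
Orient every edge towards the longer bar. Fix `i` and let `T` be the set of the `m` bars longer
than `i`, read in cyclic order starting after `i`. For `j ∈ T` the two arc counts of the pair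
`i, j` are the numbers of elements of `T` before and after `j`, so `i` has exactly
`min m (2k+2)` longer neighbours. As `i` varies, `m` takes every value `0, …, n-1` exactly once,
so the graph has `∑_{r<n} min r (2k+2)` edges. For `n ≤ 2k+2` this is `n(n-1)/2`, which forces
the graph to be complete.
-/

open Finset
open scoped Classical

variable {n : ℕ}

/-- The open cyclic arc from `i` to `j` (going in the positive direction), excluding both. -/
def Arc [NeZero n] (i j : ZMod n) : Finset (ZMod n) :=
  univ.filter fun t => 0 < (t - i).val ∧ (t - i).val < (j - i).val

/-- Number of bars on the open arc from `i` to `j` strictly longer than the shorter of `i, j`. -/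
noncomputable def exceedCount [NeZero n] (ℓ : ZMod n → ℝ) (i j : ZMod n) : ℕ :=
  ((Arc i j).filter fun t => min (ℓ i) (ℓ j) < ℓ t).card

/-- The cylindrical semi-bar `k`-visibility graph: `i ≠ j` are adjacent iff on one of the two
open cyclic arcs between them at most `k` bars are longer than `min (ℓ i) (ℓ j)`. -/
noncomputable def CylGraph (k : ℕ) [NeZero n] (ℓ : ZMod n → ℝ) : SimpleGraph (ZMod n) where
  Adj i j := i ≠ j ∧ (exceedCount ℓ i j ≤ k ∨ exceedCount ℓ j i ≤ k)
  symm := ⟨fun i j h => ⟨h.1.symm, h.2.symm⟩⟩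
  loopless := ⟨fun i h => h.1 rfl⟩

noncomputable instance (k : ℕ) [NeZero n] (ℓ : ZMod n → ℝ) :
    DecidableRel (CylGraph k ℓ).Adj := Classical.decRel _

lemma card_filter_range_le_or_le (m k : ℕ) :
    #{r ∈ range m | r ≤ k ∨ m - 1 - r ≤ k} = min m (2 * k + 2) := by
  have hsplit : {r ∈ range m | r ≤ k ∨ m - 1 - r ≤ k} = range m \ Ico (k + 1) (m - k - 1) := by
    ext r
    simp only [mem_filter, mem_range, mem_sdiff, mem_Ico]
    omega
  rw [hsplit, card_sdiff_of_subset fun r hr ↦ by simp only [mem_Ico, mem_range] at hr ⊢; omega,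
    card_range, Nat.card_Ico]
  omega

section Rank

variable {ι α : Type*} [LinearOrder α] {s : Finset ι} {f : ι → α}

lemma card_filter_lt_lt_of_lt {i j : ι} (hi : i ∈ s) (hij : f i < f j) :
    #{t ∈ s | f t < f i} < #{t ∈ s | f t < f j} :=
  card_lt_card <| (ssubset_iff_of_subset fun t ht ↦ by
      simp only [mem_filter] at ht ⊢; exact ⟨ht.1, ht.2.trans hij⟩).2
    ⟨i, by simp [hi, hij]⟩

lemma image_card_filter_lt (hf : Set.InjOn f s) :
    s.image (fun i ↦ #{t ∈ s | f t < f i}) = range #s := by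
  have hinj : Set.InjOn (fun i ↦ #{t ∈ s | f t < f i}) s := by
    intro i hi j hj h
    by_contra hne
    rcases (hf.ne hi hj hne).lt_or_gt with hlt | hlt
    · exact (card_filter_lt_lt_of_lt hi hlt).ne h
    · exact (card_filter_lt_lt_of_lt hj hlt).ne' h
  refine eq_of_subset_of_card_le (fun r hr ↦ ?_) (by rw [card_range, card_image_of_injOn hinj])
  obtain ⟨i, hi, rfl⟩ := mem_image.1 hr
  exact mem_range.2 <| card_lt_card <| filter_ssubset.2 ⟨i, hi, lt_irrefl _⟩

lemma card_filter_lt_add_card_filter_gt (hf : Set.InjOn f s) {i : ι} (hi : i ∈ s) :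
    #{t ∈ s | f t < f i} + #{t ∈ s | f i < f t} + 1 = #s := by
  have hge : {t ∈ s | ¬f t < f i} = insert i {t ∈ s | f i < f t} := by
    ext t
    simp only [mem_filter, mem_insert, not_lt]
    constructor
    · rintro ⟨ht, hle⟩
      rcases hle.eq_or_lt with heq | hlt
      · exact .inl (hf ht hi heq.symm)
      · exact .inr ⟨ht, hlt⟩
    · rintro (rfl | ⟨ht, hlt⟩)
      exacts [⟨hi, le_rfl⟩, ⟨ht, hlt.le⟩]
  rw [← card_filter_add_card_filter_not (s := s) (fun t ↦ f t < f i), hge,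
    card_insert_of_notMem (by simp), add_assoc]

lemma card_filter_few_lt_or_few_gt (hf : Set.InjOn f s) (k : ℕ) :
    #{i ∈ s | #{t ∈ s | f t < f i} ≤ k ∨ #{t ∈ s | f i < f t} ≤ k} = min #s (2 * k + 2) := by
  have hgt : ∀ i ∈ s, #{t ∈ s | f i < f t} = #s - 1 - #{t ∈ s | f t < f i} := fun i hi ↦ by
    have := card_filter_lt_add_card_filter_gt hf hi
    omega
  set rank : ι → ℕ := fun i ↦ #{t ∈ s | f t < f i}
  have himage : s.image rank = range #s := image_card_filter_lt hf
  have hinj : Set.InjOn rank s := card_image_iff.1 (by rw [himage, card_range])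
  calc #{i ∈ s | rank i ≤ k ∨ #{t ∈ s | f i < f t} ≤ k}
      = #{i ∈ s | rank i ≤ k ∨ #s - 1 - rank i ≤ k} := by
        rw [filter_congr fun i hi ↦ by rw [hgt i hi]]
    _ = #{r ∈ s.image rank | r ≤ k ∨ #s - 1 - r ≤ k} := by
        rw [filter_image, card_image_of_injOn (hinj.mono (filter_subset _ _))]
    _ = min #s (2 * k + 2) := by rw [himage, card_filter_range_le_or_le]

end Rank

section Taller

variable {ι α : Type*} [Fintype ι] [LinearOrder α]

def taller (ℓ : ι → α) (i : ι) : Finset ι := {t | ℓ i < ℓ t}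

lemma mem_taller {ℓ : ι → α} {i t : ι} : t ∈ taller ℓ i ↔ ℓ i < ℓ t := by simp [taller]

lemma sum_card_taller {M : Type*} [AddCommMonoid M] {ℓ : ι → α} (hℓ : Function.Injective ℓ)
    (φ : ℕ → M) : ∑ i, φ #(taller ℓ i) = ∑ r ∈ range (Fintype.card ι), φ r := by
  have himage : univ.image (fun i ↦ #(taller ℓ i)) = range (Fintype.card ι) := by
    simpa [taller] using image_card_filter_lt (s := univ) (f := OrderDual.toDual ∘ ℓ)
      (OrderDual.toDual.injective.comp hℓ).injOn
  rw [← himage, sum_image (card_image_iff.1 (by rw [himage, card_range, card_univ]))]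

lemma SimpleGraph.card_edgeFinset_eq_sum_card_taller (G : SimpleGraph ι) [DecidableRel G.Adj]
    {ℓ : ι → α} (hℓ : Function.Injective ℓ) :
    #G.edgeFinset = ∑ v, #{w ∈ taller ℓ v | G.Adj v w} := by
  have hpairs : #G.edgeFinset = #{p : ι × ι | ℓ p.1 < ℓ p.2 ∧ G.Adj p.1 p.2} := by
    symm
    refine card_bij (fun p _ ↦ s(p.1, p.2)) (fun p hp ↦ by simp_all) ?_ ?_
    · rintro ⟨a, b⟩ hab ⟨c, d⟩ hcd h
      simp only [mem_filter, mem_univ, true_and] at hab hcd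
      rcases Sym2.eq_iff.1 h with ⟨rfl, rfl⟩ | ⟨rfl, rfl⟩
      · rfl
      · exact absurd hcd.1 (lt_asymm hab.1)
    · refine Sym2.ind fun a b he ↦ ?_
      have hadj : G.Adj a b := G.mem_edgeFinset.1 he
      rcases (hℓ.ne hadj.ne).lt_or_gt with h | h
      · exact ⟨(a, b), by simp [h, hadj], rfl⟩
      · exact ⟨(b, a), by simp [h, hadj.symm], Sym2.eq_swap⟩
  simp only [hpairs, card_filter, Fintype.sum_prod_type, taller, filter_filter]

end Taller

section Cylinder

variable [NeZero n] {i j t : ZMod n}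

lemma mem_arc : t ∈ Arc i j ↔ 0 < (t - i).val ∧ (t - i).val < (j - i).val := by simp [Arc]

lemma mem_arc_swap (hij : i ≠ j) (hti : t ≠ i) : t ∈ Arc j i ↔ (j - i).val < (t - i).val := by
  have hji : (i - j).val = n - (j - i).val := by
    rw [← neg_sub, ZMod.neg_val, if_neg (sub_ne_zero.2 hij.symm)]
  have hti_pos : 0 < (t - i).val := ZMod.val_pos.2 (sub_ne_zero.2 hti)
  have hji_pos : 0 < (j - i).val := ZMod.val_pos.2 (sub_ne_zero.2 hij.symm)
  have hti_lt := (t - i).val_lt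
  have hji_lt := (j - i).val_lt
  rw [mem_arc, show t - j = (t - i) + (i - j) by abel]
  rcases lt_or_ge ((t - i).val + (i - j).val) n with h | h
  · rw [ZMod.val_add_of_lt h]; omega
  · rw [ZMod.val_add_of_le h]; omega

variable (ℓ : ZMod n → ℝ)

lemma exceedCount_eq_of_lt (h : ℓ i < ℓ j) :
    exceedCount ℓ i j = #{t ∈ taller ℓ i | (t - i).val < (j - i).val} := by
  rw [exceedCount, min_eq_left h.le]
  congr 1
  ext t
  simp only [mem_filter, mem_arc, mem_taller]
  constructor
  · exact fun ⟨⟨_, hlt⟩, hℓ⟩ ↦ ⟨hℓ, hlt⟩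
  · exact fun ⟨hℓ, hlt⟩ ↦ ⟨⟨ZMod.val_pos.2 (sub_ne_zero.2 (ne_of_apply_ne ℓ hℓ.ne')), hlt⟩, hℓ⟩

lemma exceedCount_swap_eq_of_lt (h : ℓ i < ℓ j) :
    exceedCount ℓ j i = #{t ∈ taller ℓ i | (j - i).val < (t - i).val} := by
  rw [exceedCount, min_eq_right h.le]
  congr 1
  ext t
  simp only [mem_filter, mem_taller]
  have hij : i ≠ j := ne_of_apply_ne ℓ h.ne
  constructor
  · exact fun ⟨harc, hℓ⟩ ↦ ⟨hℓ, (mem_arc_swap hij (ne_of_apply_ne ℓ hℓ.ne')).1 harc⟩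
  · exact fun ⟨hℓ, hlt⟩ ↦ ⟨(mem_arc_swap hij (ne_of_apply_ne ℓ hℓ.ne')).2 hlt, hℓ⟩

lemma card_cylGraph_adj_taller (k : ℕ) (i : ZMod n) :
    #{j ∈ taller ℓ i | (CylGraph k ℓ).Adj i j} = min #(taller ℓ i) (2 * k + 2) := by
  have hd : Set.InjOn (fun t : ZMod n ↦ (t - i).val) (taller ℓ i) :=
    fun a _ b _ h ↦ sub_left_injective (ZMod.val_injective n h)
  rw [← card_filter_few_lt_or_few_gt hd k]
  congr 1
  refine filter_congr fun j hj ↦ ?_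
  have hij : ℓ i < ℓ j := mem_taller.1 hj
  simp only [CylGraph, exceedCount_eq_of_lt ℓ hij, exceedCount_swap_eq_of_lt ℓ hij,
    and_iff_right (ne_of_apply_ne ℓ hij.ne)]

lemma card_edgeFinset_cylGraph (k : ℕ) (hℓ : Function.Injective ℓ) :
    #(CylGraph k ℓ).edgeFinset = ∑ r ∈ range n, min r (2 * k + 2) := by
  rw [(CylGraph k ℓ).card_edgeFinset_eq_sum_card_taller hℓ]
  simp only [card_cylGraph_adj_taller]
  rw [sum_card_taller hℓ (fun r ↦ min r (2 * k + 2)), ZMod.card]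

end Cylinder

lemma sum_range_min_of_le {m c : ℕ} (h : m ≤ c) : ∑ r ∈ range m, min r c = m * (m - 1) / 2 := by
  rw [sum_congr rfl fun r hr ↦ min_eq_left (by rw [mem_range] at hr; omega), sum_range_id]

lemma sum_range_min_two_mul_add_two {m k : ℕ} (h : 2 * k + 2 ≤ m) :
    ∑ r ∈ range m, min r (2 * k + 2) = (k + 1) * (2 * m - (2 * k + 3)) := by
  induction m, h using Nat.le_induction with
  | base =>
    rw [sum_range_min_of_le le_rfl, show 2 * k + 2 - 1 = 2 * k + 1 by omega,
      show 2 * (2 * k + 2) - (2 * k + 3) = 2 * k + 1 by omega]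
    exact Nat.div_eq_of_eq_mul_left two_pos (by ring)
  | succ m hm ih =>
    rw [sum_range_succ, ih, min_eq_right (by omega),
      show 2 * (m + 1) - (2 * k + 3) = 2 * m - (2 * k + 3) + 2 by omega]
    ring

/-- edge count of a cylindrical semi-bar `k`-visibility graph with distinct
lengths: `(k+1)(2n-2k-3)` when `n ≥ 2k+2`, and complete with `n(n-1)/2` edges when
`n ≤ 2k+2`. -/
theorem stmt1 (k : ℕ) [NeZero n] (ℓ : ZMod n → ℝ) (hinj : Function.Injective ℓ) :
    (2 * k + 2 ≤ n → (CylGraph k ℓ).edgeFinset.card = (k + 1) * (2 * n - (2 * k + 3))) ∧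
    (n ≤ 2 * k + 2 → CylGraph k ℓ = ⊤ ∧ (CylGraph k ℓ).edgeFinset.card = n * (n - 1) / 2) := by
  have hcard := card_edgeFinset_cylGraph ℓ k hinj
  refine ⟨fun hn ↦ by rw [hcard, sum_range_min_two_mul_add_two hn], fun hn ↦ ?_⟩
  have hcomplete : #(CylGraph k ℓ).edgeFinset = n * (n - 1) / 2 := by
    rw [hcard, sum_range_min_of_le hn]
  refine ⟨?_, hcomplete⟩
  rw [← SimpleGraph.edgeFinset_inj]
  refine eq_of_subset_of_card_le (SimpleGraph.edgeFinset_mono le_top) ?_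
  rw [SimpleGraph.card_edgeFinset_top_eq_card_choose_two, ZMod.card, Nat.choose_two_right,
    hcomplete]
end

section
/- Every cylindrical semi-bar k-visibility graph (with injective lengths) is (2k+2)-degenerate: every nonempty subset S of vertices contains a vertex whose number of neighbors within S is at most 2k+2. -/
/-! Let `i` be a vertex of `S` of minimal length. Every neighbour `j ∈ S` of `i` is longer than
`i`, so `min (ℓ i) (ℓ j) = ℓ i` and every other neighbour counts as an exceeding bar on any arc
containing it. Among the neighbours seen through the arc from `i` to `j`, the one farthest from
`i` along that arc has all the others on its arc, so there are at most `k + 1` of them; the same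
holds for the arc from `j` to `i`, measured backwards from `i`. -/

open Finset
open scoped Classical

variable {n : ℕ}

theorem Finset.card_le_succ_of_card_filter_lt_le {α : Type*} {A : Finset α} {p : α → ℕ}
    (hp : Set.InjOn p A) {k : ℕ} (h : ∀ j ∈ A, #(A.filter fun t => p t < p j) ≤ k) :
    #A ≤ k + 1 := by
  rcases A.eq_empty_or_nonempty with rfl | hA
  · simp
  obtain ⟨j, hj, hmax⟩ := A.exists_max_image p hA
  have hsub : A.erase j ⊆ A.filter fun t => p t < p j := fun t ht => by
    obtain ⟨htj, htA⟩ := mem_erase.mp ht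
    exact mem_filter.mpr ⟨htA, (hmax t htA).lt_of_ne fun e => htj (hp htA hj e)⟩
  have := (card_le_card hsub).trans (h j hj)
  rw [card_erase_of_mem hj] at this
  omega

namespace CylGraph

variable [NeZero n]

theorem mem_arc_of_val_sub_lt_left {i j t : ZMod n} (hti : t ≠ i)
    (h : (t - i).val < (j - i).val) : t ∈ Arc i j := by
  simpa [Arc, ZMod.val_pos, sub_ne_zero] using And.intro hti h

theorem mem_arc_of_val_sub_lt_right {i j t : ZMod n} (htj : t ≠ j)
    (h : (j - t).val < (j - i).val) : t ∈ Arc i j := by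
  have hval : (t - i).val = (j - i).val - (j - t).val := by
    rw [← ZMod.val_sub h.le, sub_sub_sub_cancel_left]
  have hpos : 0 < (j - t).val := ZMod.val_pos.mpr (sub_ne_zero.mpr htj.symm)
  simp only [Arc, mem_filter, mem_univ, true_and, hval]
  omega

theorem card_filter_exceedCount_left_le (k : ℕ) (ℓ : ZMod n → ℝ) {i : ZMod n}
    {T : Finset (ZMod n)} (hT : ∀ j ∈ T, ℓ i < ℓ j) :
    #(T.filter fun j => exceedCount ℓ i j ≤ k) ≤ k + 1 := by
  refine card_le_succ_of_card_filter_lt_le (p := fun t => (t - i).val)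
    (fun a _ b _ e => sub_left_injective (ZMod.val_injective n e)) fun j hj => ?_
  obtain ⟨hjT, hjk⟩ := mem_filter.mp hj
  refine le_trans (card_le_card fun t ht => ?_) hjk
  obtain ⟨⟨htT, -⟩, hlt⟩ : (t ∈ T ∧ _) ∧ _ := by simpa only [mem_filter] using ht
  rw [mem_filter, min_eq_left (hT j hjT).le]
  exact ⟨mem_arc_of_val_sub_lt_left (ne_of_apply_ne ℓ (hT t htT).ne') hlt, hT t htT⟩

theorem card_filter_exceedCount_right_le (k : ℕ) (ℓ : ZMod n → ℝ) {i : ZMod n}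
    {T : Finset (ZMod n)} (hT : ∀ j ∈ T, ℓ i < ℓ j) :
    #(T.filter fun j => exceedCount ℓ j i ≤ k) ≤ k + 1 := by
  refine card_le_succ_of_card_filter_lt_le (p := fun t => (i - t).val)
    (fun a _ b _ e => sub_right_injective (ZMod.val_injective n e)) fun j hj => ?_
  obtain ⟨hjT, hjk⟩ := mem_filter.mp hj
  refine le_trans (card_le_card fun t ht => ?_) hjk
  obtain ⟨⟨htT, -⟩, hlt⟩ : (t ∈ T ∧ _) ∧ _ := by simpa only [mem_filter] using ht
  rw [mem_filter, min_eq_right (hT j hjT).le]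
  exact ⟨mem_arc_of_val_sub_lt_right (ne_of_apply_ne ℓ (hT t htT).ne') hlt, hT t htT⟩

end CylGraph

/-- cylindrical semi-bar `k`-visibility graphs with distinct lengths are
`(2k+2)`-degenerate: every nonempty set of vertices contains a vertex with at most `2k+2`
neighbors inside the set. -/
theorem stmt3 (k : ℕ) [NeZero n] (ℓ : ZMod n → ℝ) (hinj : Function.Injective ℓ) :
    ∀ S : Finset (ZMod n), S.Nonempty →
      ∃ i ∈ S, (S.filter fun j => (CylGraph k ℓ).Adj i j).card ≤ 2 * k + 2 := by
  intro S hS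
  obtain ⟨i, hiS, hmin⟩ := S.exists_min_image ℓ hS
  refine ⟨i, hiS, ?_⟩
  set T := S.filter fun j => ℓ i < ℓ j
  have hT : ∀ j ∈ T, ℓ i < ℓ j := fun j hj => (mem_filter.mp hj).2
  have hsub : S.filter (fun j => (CylGraph k ℓ).Adj i j) ⊆
      T.filter (fun j => exceedCount ℓ i j ≤ k) ∪ T.filter (fun j => exceedCount ℓ j i ≤ k) := by
    intro j hj
    obtain ⟨hjS, hij, hadj⟩ := mem_filter.mp hj
    have hjT : j ∈ T := mem_filter.mpr ⟨hjS, (hmin j hjS).lt_of_ne fun e => hij (hinj e)⟩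
    simpa [mem_union, mem_filter, hjT] using hadj
  calc #(S.filter fun j => (CylGraph k ℓ).Adj i j)
      ≤ #(T.filter fun j => exceedCount ℓ i j ≤ k) + #(T.filter fun j => exceedCount ℓ j i ≤ k) :=
        (card_le_card hsub).trans (card_union_le _ _)
    _ ≤ 2 * k + 2 := by
      linarith [CylGraph.card_filter_exceedCount_left_le k ℓ hT,
        CylGraph.card_filter_exceedCount_right_le k ℓ hT]
end

section
/- The complete graph K_{2k+3} is a cylindrical semi-bar k-visibility graph: if n = 2k+3 and ℓ : ZMod n → ℝ is injective, then every pair of distinct vertices is adjacent in the cylindrical semi-bar k-visibility graph. -/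
open Finset
open scoped Classical

variable {n : ℕ}

/-!
Whatever the bar lengths, the two open arcs between distinct vertices `i ≠ j` together contain
the other `n - 2 = 2k + 1` vertices, so one of them has at most `k` vertices at all, let alone
`k` bars longer than `min (ℓ i) (ℓ j)`.
-/

section Arc

variable [NeZero n]

/-- `t ↦ (t - i).val` identifies `Arc i j` with `Ioo 0 (j - i).val`. -/
theorem card_arc (i j : ZMod n) : (Arc i j).card = (j - i).val - 1 := by
  rw [← Nat.sub_zero (j - i).val, ← Nat.card_Ioo]
  have hlt : (j - i).val < n := ZMod.val_lt _
  refine card_nbij' (fun t => (t - i).val) (fun m => (m : ZMod n) + i) ?_ ?_ ?_ ?_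
  · intro t ht
    simpa [Arc] using ht
  · intro m hm
    simp only [coe_Ioo, Set.mem_Ioo] at hm
    simp only [Arc, coe_filter, mem_univ, true_and, Set.mem_ofPred_eq, add_sub_cancel_right,
      ZMod.val_cast_of_lt (hm.2.trans hlt)]
    exact hm
  · intro t _
    simp
  · intro m hm
    simp only [coe_Ioo, Set.mem_Ioo] at hm
    simp [ZMod.val_cast_of_lt (hm.2.trans hlt)]

theorem card_arc_add_card_arc {i j : ZMod n} (hij : i ≠ j) :
    (Arc i j).card + (Arc j i).card = n - 2 := by
  have hne : j - i ≠ 0 := sub_ne_zero.mpr hij.symm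
  have : NeZero (j - i) := ⟨hne⟩
  have hpos : (j - i).val ≠ 0 := (ZMod.val_ne_zero _).mpr hne
  have hneg : (i - j).val = n - (j - i).val := by
    rw [← neg_sub, ZMod.val_neg_of_ne_zero]
  have hlt : (j - i).val < n := ZMod.val_lt _
  rw [card_arc, card_arc, hneg]
  omega

end Arc

theorem stmt5_general (k : ℕ) [NeZero n] (hn : n = 2 * k + 3) (ℓ : ZMod n → ℝ) :
    ∀ i j : ZMod n, i ≠ j → (CylGraph k ℓ).Adj i j := by
  intro i j hij
  have hcard := card_arc_add_card_arc hij
  have hij_le : exceedCount ℓ i j ≤ (Arc i j).card := card_filter_le _ _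
  have hji_le : exceedCount ℓ j i ≤ (Arc j i).card := card_filter_le _ _
  exact ⟨hij, by omega⟩

/-- `K_{2k+3}` is a cylindrical semi-bar `k`-visibility graph: with `n = 2k+3`
bars of distinct lengths, every pair of distinct bars is adjacent. -/
theorem stmt5 (k : ℕ) [NeZero n] (hn : n = 2 * k + 3) (ℓ : ZMod n → ℝ)
    (hinj : Function.Injective ℓ) :
    ∀ i j : ZMod n, i ≠ j → (CylGraph k ℓ).Adj i j :=
  stmt5_general k hn ℓ
end

section
/- Every cylindrical semi-bar k-visibility graph is (k+2)-quasiplanar convex geometric: if G is the cylindrical semi-bar k-visibility graph determined by lengths ℓ on ZMod n, and we draw vertex i at position i on a convex n-gon with edges as chords, then there do not exist k+2 pairwise crossing chords. Combinatorially: there is no family of k+2 edges {a_1,b_1}, …, {a_{k+2}, b_{k+2}} of G that pairwise cross as chords of the cyclic order on ZMod n (two chords {a,b} and {c,d} with all four endpoints distinct cross iff exactly one of c, d lies on the cyclic open arc from a to b). -/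
open Finset
open scoped Classical

variable {n : ℕ}

/-- Two chords `{a,b}` and `{c,d}` with all four endpoints distinct cross iff exactly one of
`c, d` lies on the open cyclic arc from `a` to `b`. -/
def Crosses [NeZero n] (a b c d : ZMod n) : Prop :=
  a ≠ b ∧ c ≠ d ∧ a ≠ c ∧ a ≠ d ∧ b ≠ c ∧ b ≠ d ∧
    Xor' (c ∈ Arc a b) (d ∈ Arc a b)

/-- A convex geometric representation (edges drawn as chords of the cyclic order on `ZMod n`)
is `m`-quasiplanar if it has no `m` pairwise crossing edges. -/
def QuasiPlanar (m : ℕ) [NeZero n] (G : SimpleGraph (ZMod n)) : Prop :=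
  ¬ ∃ f g : Fin m → ZMod n, (∀ p, G.Adj (f p) (g p)) ∧
      ∀ p q, p ≠ q → Crosses (f p) (g p) (f q) (g q)

/-- Maximality: adding any absent chord creates `m` pairwise crossing edges. -/
def MaximalQP (m : ℕ) [NeZero n] (G : SimpleGraph (ZMod n)) : Prop :=
  ∀ a b : ZMod n, a ≠ b → ¬ G.Adj a b →
    ¬ QuasiPlanar m (G ⊔ SimpleGraph.fromEdgeSet {s(a, b)})

/-
Take the edge `{a, b}` of the family whose shorter endpoint is shortest, say of length `μ`.
Every other edge crosses it, so it has an endpoint on each of the two open arcs between `a`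
and `b`; by injectivity of `ℓ` both of its endpoints are longer than `μ`. Pairwise crossing
edges have pairwise disjoint endpoints, so each arc carries at least `k + 1` bars longer than
`μ`, and `a`, `b` are not adjacent.
-/

lemma mem_arc_iff [NeZero n] {i j t : ZMod n} :
    t ∈ Arc i j ↔ 0 < (t - i).val ∧ (t - i).val < (j - i).val := by
  simp [Arc]

lemma mem_arc_or_mem_arc_swap [NeZero n] {a b t : ZMod n} (hab : a ≠ b) (hta : t ≠ a)
    (htb : t ≠ b) : t ∈ Arc a b ∨ t ∈ Arc b a := by
  have hx : (t - a).val ≠ 0 := by simpa [sub_eq_zero] using hta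
  have hba : b - a ≠ 0 := sub_ne_zero.mpr hab.symm
  have hxy : (t - a).val ≠ (b - a).val := fun h =>
    htb (sub_left_injective (ZMod.val_injective n h))
  rcases lt_or_gt_of_ne hxy with h | h
  · exact .inl (mem_arc_iff.mpr ⟨Nat.pos_of_ne_zero hx, h⟩)
  · have htb' : (t - b).val = (t - a).val - (b - a).val := by
      rw [← ZMod.val_sub h.le]; ring_nf
    have hab' : (a - b).val = n - (b - a).val := by
      rw [← neg_sub, ZMod.neg_val, if_neg hba]
    have := ZMod.val_lt (t - a)
    exact .inr (mem_arc_iff.mpr (by omega))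

lemma Crosses.meets_both_arcs [NeZero n] {a b c d : ZMod n} (h : Crosses a b c d) :
    (c ∈ Arc a b ∨ d ∈ Arc a b) ∧ (c ∈ Arc b a ∨ d ∈ Arc b a) := by
  obtain ⟨hab, -, hac, had, hbc, hbd, hx⟩ := h
  rcases hx with ⟨hc, hd⟩ | ⟨hd, hc⟩
  · exact ⟨.inl hc, .inr ((mem_arc_or_mem_arc_swap hab had.symm hbd.symm).resolve_left hd)⟩
  · exact ⟨.inr hd, .inl ((mem_arc_or_mem_arc_swap hab hac.symm hbc.symm).resolve_left hc)⟩

lemma Crosses.min_lt_min [NeZero n] {a b c d : ZMod n} (h : Crosses a b c d)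
    {ℓ : ZMod n → ℝ} (hinj : Function.Injective ℓ) (hle : min (ℓ a) (ℓ b) ≤ min (ℓ c) (ℓ d)) :
    min (ℓ a) (ℓ b) < min (ℓ c) (ℓ d) := by
  obtain ⟨-, -, hac, had, hbc, hbd, -⟩ := h
  refine hle.lt_of_ne fun heq => ?_
  rcases min_choice (ℓ a) (ℓ b) with h₁ | h₁ <;> rcases min_choice (ℓ c) (ℓ d) with h₂ | h₂ <;>
    rw [h₁, h₂] at heq
  exacts [hac (hinj heq), had (hinj heq), hbc (hinj heq), hbd (hinj heq)]

lemma card_le_exceedCount [NeZero n] {ι : Type*} {ℓ : ZMod n → ℝ} (s : Finset ι)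
    (f g : ι → ZMod n) {c d : ZMod n}
    (hcross : ∀ p ∈ s, ∀ q ∈ s, p ≠ q → Crosses (f p) (g p) (f q) (g q))
    (hmeet : ∀ q ∈ s, f q ∈ Arc c d ∨ g q ∈ Arc c d)
    (hgt : ∀ q ∈ s, min (ℓ c) (ℓ d) < min (ℓ (f q)) (ℓ (g q))) :
    #s ≤ exceedCount ℓ c d := by
  refine card_le_card_of_forall_subsingleton (fun q t => t = f q ∨ t = g q) ?_ ?_
  · intro q hq
    have hlong := hgt q hq
    rcases hmeet q hq with h | h
    · exact ⟨f q, mem_filter.mpr ⟨h, hlong.trans_le (min_le_left _ _)⟩, .inl rfl⟩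
    · exact ⟨g q, mem_filter.mpr ⟨h, hlong.trans_le (min_le_right _ _)⟩, .inr rfl⟩
  · rintro t - p ⟨hp, hpt⟩ q ⟨hq, hqt⟩
    by_contra hpq
    obtain ⟨-, -, h₁, h₂, h₃, h₄, -⟩ := hcross p hp q hq hpq
    rcases hpt with rfl | rfl <;> rcases hqt with h | h
    exacts [h₁ h, h₂ h, h₃ h, h₄ h]

/-- every cylindrical semi-bar `k`-visibility graph, drawn with vertices in
convex position in the cyclic order of the bars and edges as chords, has no `k+2` pairwise
crossing edges, i.e. it is `(k+2)`-quasiplanar convex geometric. -/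
theorem stmt6 (k : ℕ) [NeZero n] (ℓ : ZMod n → ℝ) (hinj : Function.Injective ℓ) :
    QuasiPlanar (k + 2) (CylGraph k ℓ) := by
  rintro ⟨f, g, hadj, hcross⟩
  obtain ⟨p, -, hp⟩ := exists_min_image univ (fun p => min (ℓ (f p)) (ℓ (g p))) ⟨0, mem_univ 0⟩
  set s := univ.erase p
  have hs : #s = k + 1 := by simp [s]
  have hcross' : ∀ q ∈ s, Crosses (f p) (g p) (f q) (g q) := fun q hq =>
    hcross p q (ne_of_mem_erase hq).symm
  have hgt : ∀ q ∈ s, min (ℓ (f p)) (ℓ (g p)) < min (ℓ (f q)) (ℓ (g q)) := fun q hq =>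
    (hcross' q hq).min_lt_min hinj (hp q (mem_univ q))
  have hcross_s : ∀ q ∈ s, ∀ r ∈ s, q ≠ r → Crosses (f q) (g q) (f r) (g r) :=
    fun q _ r _ => hcross q r
  have hab := card_le_exceedCount s f g hcross_s (fun q hq => (hcross' q hq).meets_both_arcs.1) hgt
  have hba := card_le_exceedCount s f g hcross_s (fun q hq => (hcross' q hq).meets_both_arcs.2)
    (fun q hq => min_comm (ℓ (g p)) (ℓ (f p)) ▸ hgt q hq)
  rcases (hadj p).2 with h | h <;> omega
end

section
/- Suppose a (linear) semi-bar k-visibility representation R with n distinct lengths ℓ(1), …, ℓ(n) (bottom to top) is curled into a cylindrical representation R′ (same cyclic order 1, …, n around the cylinder). The visibility graphs of R and R′ are equal if and only if: the top k+1 bars and bottom k+1 bars of R together are exactly the 2k+2 longest bars of R, and these 2k+2 longest bars are pairwise visible in R. -/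
open Finset
open scoped Classical

variable {n : ℕ}

/-- In a linear semi-bar representation (bars `0, …, n-1` from bottom to top), the number of
bars strictly between `i` and `j` that are longer than the shorter of the two. -/
noncomputable def btwCount (ℓ : Fin n → ℝ) (i j : Fin n) : ℕ :=
  (univ.filter fun t => min i j < t ∧ t < max i j ∧ min (ℓ i) (ℓ j) < ℓ t).card

/-- Linear semi-bar `k`-visibility adjacency. -/
noncomputable def LinAdj (k : ℕ) (ℓ : Fin n → ℝ) (i j : Fin n) : Prop :=
  i ≠ j ∧ btwCount ℓ i j ≤ k

/-- The open cyclic arc from `i` to `j` after curling bars `0, …, n-1` onto a cylinder. -/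
def cycArc (i j : Fin n) : Finset (Fin n) :=
  univ.filter fun t => if i < j then (i < t ∧ t < j) else (i < t ∨ t < j)

noncomputable def cycCount (ℓ : Fin n → ℝ) (i j : Fin n) : ℕ :=
  ((cycArc i j).filter fun t => min (ℓ i) (ℓ j) < ℓ t).card

/-- Cylindrical semi-bar `k`-visibility adjacency on the curled representation. -/
noncomputable def CylAdjF (k : ℕ) (ℓ : Fin n → ℝ) (i j : Fin n) : Prop :=
  i ≠ j ∧ (cycCount ℓ i j ≤ k ∨ cycCount ℓ j i ≤ k)

/-!
For bars `i < j` with shorter bar `s`, the bars longer than `s` other than the partner split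
between the linear gap and the arc through the seam of the cylinder, so the two counts add up
to `#{longer than s} - 1`. Curling preserves the graph iff a seam count `≤ k` always forces a
gap count `≤ k`.

If a bar `s` among the bottom `k + 1` had `2k + 2` longer bars, the topmost of them, `j`, would
see `s` through the seam (only the at most `k` longer bars below `s` are in the way) but not
linearly (at least `k + 1` longer bars are in the gap): a new edge. So the ends lie among the
`2k + 2` longest bars, and counting makes the two sets equal. Among the longest bars one of the
two counts is at most `k`, whence pairwise visibility. Conversely, if the shorter bar of a pair is
not among the longest, the whole bottom (or top) block, all longer, lies on the seam arc.
-/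
noncomputable def longerCount {α : Type*} [Fintype α] (ℓ : α → ℝ) (i : α) : ℕ :=
  #{v | ℓ i < ℓ v}

section longerCount

variable {α : Type*} [Fintype α] {ℓ : α → ℝ} {i j : α}

lemma longerCount_le_of_le (h : ℓ i ≤ ℓ j) : longerCount ℓ j ≤ longerCount ℓ i :=
  card_le_card fun t ht => by
    simp only [mem_filter, mem_univ, true_and] at ht ⊢
    linarith

lemma longerCount_lt_of_lt (h : ℓ i < ℓ j) : longerCount ℓ j < longerCount ℓ i := by
  refine card_lt_card ((ssubset_iff_of_subset fun t ht => ?_).2 ⟨j, ?_, ?_⟩)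
  all_goals simp only [mem_filter, mem_univ, true_and] at *
  exacts [h.trans ht, h, lt_irrefl _]

lemma lt_of_longerCount_lt (h : longerCount ℓ j < longerCount ℓ i) : ℓ i < ℓ j := by
  by_contra! hle
  exact (longerCount_le_of_le hle).not_gt h

lemma longerCount_injective (hinj : Function.Injective ℓ) :
    Function.Injective (longerCount ℓ) := by
  intro i j h
  by_contra hne
  rcases (hinj.ne hne).lt_or_gt with hlt | hlt
  · exact (longerCount_lt_of_lt hlt).ne' h
  · exact (longerCount_lt_of_lt hlt).ne h

lemma card_longerCount_lt_le (hinj : Function.Injective ℓ) (m : ℕ) :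
    #{i | longerCount ℓ i < m} ≤ m :=
  calc #{i | longerCount ℓ i < m}
      ≤ #(range m) := card_le_card_of_injOn (longerCount ℓ) (fun i hi => by simpa using hi)
        (longerCount_injective hinj).injOn
    _ = m := card_range m

end longerCount

lemma card_filter_sub_le_val {m : ℕ} (hm : m ≤ n) : #{i : Fin n | n - m ≤ i.val} = m := by
  have h := card_filter_add_card_filter_not (s := univ) (p := fun i : Fin n => i.val < n - m)
  simp only [not_lt, card_univ, Fintype.card_fin] at h
  rw [Fin.card_filter_val_lt] at h
  omega

lemma card_filter_val_lt_or_sub_le {m : ℕ} (hm : 2 * m ≤ n) :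
    #{i : Fin n | i.val < m ∨ n - m ≤ i.val} = 2 * m := by
  rw [filter_or, card_union_of_disjoint, Fin.card_filter_val_lt, card_filter_sub_le_val (by omega)]
  · omega
  · simp only [disjoint_left, mem_filter, mem_univ, true_and]
    omega

section Curl

variable {k : ℕ} {ℓ : Fin n → ℝ} {i j : Fin n}

lemma btwCount_comm (ℓ : Fin n → ℝ) (i j : Fin n) : btwCount ℓ i j = btwCount ℓ j i := by
  rw [btwCount, btwCount, min_comm j, max_comm j, min_comm (ℓ j)]

lemma LinAdj.symm (h : LinAdj k ℓ i j) : LinAdj k ℓ j i :=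
  ⟨h.1.symm, btwCount_comm ℓ j i ▸ h.2⟩

lemma btwCount_of_lt (hij : i < j) :
    btwCount ℓ i j = #{t | i < t ∧ t < j ∧ min (ℓ i) (ℓ j) < ℓ t} := by
  rw [btwCount, min_eq_left hij.le, max_eq_right hij.le]

lemma mem_cycArc_of_lt {t : Fin n} (hij : i < j) : t ∈ cycArc i j ↔ i < t ∧ t < j := by
  simp [cycArc, hij]

lemma mem_cycArc_of_gt {t : Fin n} (hij : i < j) : t ∈ cycArc j i ↔ j < t ∨ t < i := by
  simp [cycArc, hij.not_gt]

lemma cycCount_of_lt (hij : i < j) : cycCount ℓ i j = btwCount ℓ i j := by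
  rw [btwCount_of_lt hij, cycCount]
  congr 1
  ext t
  simp [mem_cycArc_of_lt hij, and_assoc]

lemma LinAdj.cylAdjF (h : LinAdj k ℓ i j) : CylAdjF k ℓ i j := by
  refine ⟨h.1, ?_⟩
  rcases h.1.lt_or_gt with hij | hij
  · exact .inl (cycCount_of_lt hij ▸ h.2)
  · exact .inr (cycCount_of_lt hij ▸ btwCount_comm ℓ i j ▸ h.2)

lemma btwCount_add_cycCount_add_one (hij : i < j) (hne : ℓ i ≠ ℓ j) :
    btwCount ℓ i j + cycCount ℓ j i + 1 = #{v | min (ℓ i) (ℓ j) < ℓ v} := by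
  set m := min (ℓ i) (ℓ j)
  have hsplit : univ.filter (m < ℓ ·) = (univ.filter (fun t => i < t ∧ t < j ∧ m < ℓ t) ∪
      (cycArc j i).filter (m < ℓ ·)) ∪ ({i, j} : Finset (Fin n)).filter (m < ℓ ·) := by
    ext t
    simp only [mem_union, mem_filter, mem_univ, true_and, mem_cycArc_of_gt hij, mem_insert,
      mem_singleton]
    grind
  have hends : #(({i, j} : Finset (Fin n)).filter (m < ℓ ·)) = 1 := by
    rcases hne.lt_or_gt with h | h
    · simp [m, filter_insert, filter_singleton, min_eq_left h.le, h]
    · simp [m, filter_insert, filter_singleton, min_eq_right h.le, h]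
  rw [hsplit, card_union_of_disjoint, card_union_of_disjoint, hends, btwCount_of_lt hij, cycCount,
    min_comm (ℓ j)]
  all_goals
    simp only [disjoint_left, mem_union, mem_filter, mem_univ, true_and, mem_cycArc_of_gt hij,
      mem_insert, mem_singleton]
    grind

lemma card_le_cycCount (hij : i < j) {B : Finset (Fin n)}
    (hB : ∀ t ∈ B, (j < t ∨ t < i) ∧ min (ℓ i) (ℓ j) < ℓ t) : #B ≤ cycCount ℓ j i :=
  card_le_card fun t ht => by
    rw [mem_filter, mem_cycArc_of_gt hij, min_comm]
    exact hB t ht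

/-- For `i < j`, `cycCount ℓ j i` counts the longer bars on the arc through the seam of the
cylinder, the only arc that the linear representation does not have. -/
def CurlingAddsNoEdge (k : ℕ) (ℓ : Fin n → ℝ) : Prop :=
  ∀ ⦃i j : Fin n⦄, i < j → cycCount ℓ j i ≤ k → btwCount ℓ i j ≤ k

lemma linAdj_iff_cylAdjF_iff :
    (∀ i j, LinAdj k ℓ i j ↔ CylAdjF k ℓ i j) ↔ CurlingAddsNoEdge k ℓ := by
  refine ⟨fun h i j hij hwrap => ((h i j).2 ⟨hij.ne, .inr hwrap⟩).2,
    fun h i j => ⟨LinAdj.cylAdjF, ?_⟩⟩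
  rintro ⟨hne, hij | hji⟩
  · rcases hne.lt_or_gt with hlt | hlt
    · exact ⟨hne, cycCount_of_lt hlt ▸ hij⟩
    · exact LinAdj.symm ⟨hne.symm, h hlt hij⟩
  · rcases hne.lt_or_gt with hlt | hlt
    · exact ⟨hne, h hlt hji⟩
    · exact LinAdj.symm ⟨hne.symm, cycCount_of_lt hlt ▸ hji⟩

namespace CurlingAddsNoEdge

lemma lt_cycCount (h : CurlingAddsNoEdge k ℓ) (hij : i < j) (hne : ℓ i ≠ ℓ j)
    (hlong : 2 * k + 2 ≤ #{v | min (ℓ i) (ℓ j) < ℓ v}) : k < cycCount ℓ j i := by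
  by_contra! hwrap
  have := h hij hwrap
  have := btwCount_add_cycCount_add_one hij hne
  omega

lemma longerCount_lt_of_val_lt (h : CurlingAddsNoEdge k ℓ) {s : Fin n} (hs : s.val < k + 1) :
    longerCount ℓ s < 2 * k + 2 := by
  by_contra! hlong
  obtain ⟨j, hj, hjmax⟩ := (univ.filter (ℓ s < ℓ ·)).exists_max_image id
    (card_pos.1 (by unfold longerCount at hlong; omega))
  simp only [mem_filter, mem_univ, true_and, id] at hj hjmax
  have hsj : s < j := by
    by_contra! hjs
    have : longerCount ℓ s ≤ #(Iio s) := card_le_card fun t ht =>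
      mem_Iio.2 ((hjmax t (mem_filter.1 ht).2).trans_lt
        (hjs.lt_of_ne (ne_of_apply_ne ℓ hj.ne')))
    rw [Fin.card_Iio] at this
    omega
  have hwrap : cycCount ℓ j s ≤ #(Iio s) := card_le_card fun t ht => by
    rw [mem_filter, mem_cycArc_of_gt hsj, min_eq_right hj.le] at ht
    exact mem_Iio.2 (ht.1.resolve_left (hjmax t ht.2).not_gt)
  have := h.lt_cycCount hsj hj.ne (by rwa [min_eq_left hj.le])
  rw [Fin.card_Iio] at hwrap
  omega

lemma longerCount_lt_of_sub_le_val (h : CurlingAddsNoEdge k ℓ) {s : Fin n}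
    (hs : n - (k + 1) ≤ s.val) :
    longerCount ℓ s < 2 * k + 2 := by
  by_contra! hlong
  obtain ⟨i, hi, himin⟩ := (univ.filter (ℓ s < ℓ ·)).exists_min_image id
    (card_pos.1 (by unfold longerCount at hlong; omega))
  simp only [mem_filter, mem_univ, true_and, id] at hi himin
  have his : i < s := by
    by_contra! hsi
    have : longerCount ℓ s ≤ #(Ioi s) := card_le_card fun t ht =>
      mem_Ioi.2 ((hsi.lt_of_ne (ne_of_apply_ne ℓ hi.ne)).trans_le (himin t (mem_filter.1 ht).2))
    rw [Fin.card_Ioi] at this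
    omega
  have hwrap : cycCount ℓ s i ≤ #(Ioi s) := card_le_card fun t ht => by
    rw [mem_filter, mem_cycArc_of_gt his, min_eq_left hi.le] at ht
    exact mem_Ioi.2 (ht.1.resolve_right (himin t ht.2).not_gt)
  have := h.lt_cycCount his hi.ne' (by rwa [min_eq_right hi.le])
  rw [Fin.card_Ioi] at hwrap
  omega

lemma ends_iff_longerCount_lt (h : CurlingAddsNoEdge k ℓ)
    (hinj : Function.Injective ℓ) (hn : 2 * k + 2 ≤ n) (i : Fin n) :
    (i.val < k + 1 ∨ n - (k + 1) ≤ i.val) ↔ longerCount ℓ i < 2 * k + 2 := by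
  have hsub : univ.filter (fun i : Fin n => i.val < k + 1 ∨ n - (k + 1) ≤ i.val) ⊆
      univ.filter (longerCount ℓ · < 2 * k + 2) := fun s hs => by
    simp only [mem_filter, mem_univ, true_and] at hs ⊢
    exact hs.elim h.longerCount_lt_of_val_lt h.longerCount_lt_of_sub_le_val
  have heq := eq_of_subset_of_card_le hsub <| by
    rw [card_filter_val_lt_or_sub_le (by omega)]
    exact card_longerCount_lt_le hinj _
  simpa using Finset.ext_iff.1 heq i

lemma linAdj_of_longerCount_lt (h : CurlingAddsNoEdge k ℓ)
    (hinj : Function.Injective ℓ) (hij : i ≠ j) (hi : longerCount ℓ i < 2 * k + 2)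
    (hj : longerCount ℓ j < 2 * k + 2) : LinAdj k ℓ i j := by
  wlog hlt : i < j generalizing i j
  · exact (this hij.symm hj hi (hij.symm.lt_of_le (not_lt.1 hlt))).symm
  have hsum := btwCount_add_cycCount_add_one (ℓ := ℓ) hlt (hinj.ne hij)
  have hshort : #{v | min (ℓ i) (ℓ j) < ℓ v} < 2 * k + 2 := by
    rcases min_choice (ℓ i) (ℓ j) with hm | hm <;> rw [hm] <;> assumption
  refine ⟨hij, ?_⟩
  by_contra! hbtw
  have := h hlt (by omega)
  omega

end CurlingAddsNoEdge

lemma curlingAddsNoEdge_of_ends (hn : k + 1 ≤ n)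
    (hends : ∀ i : Fin n, (i.val < k + 1 ∨ n - (k + 1) ≤ i.val) ↔ longerCount ℓ i < 2 * k + 2)
    (hvis : ∀ i j : Fin n, i ≠ j → longerCount ℓ i < 2 * k + 2 → longerCount ℓ j < 2 * k + 2 →
      LinAdj k ℓ i j) :
    CurlingAddsNoEdge k ℓ := by
  intro i j hij hwrap
  have hlonger {s t : Fin n} (hs : ¬ longerCount ℓ s < 2 * k + 2)
      (ht : t.val < k + 1 ∨ n - (k + 1) ≤ t.val) : ℓ s < ℓ t :=
    lt_of_longerCount_lt (((hends t).1 ht).trans_le (not_lt.1 hs))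
  rcases le_total (ℓ i) (ℓ j) with hle | hle
  · by_cases hi : longerCount ℓ i < 2 * k + 2
    · exact (hvis i j hij.ne hi ((longerCount_le_of_le hle).trans_lt hi)).2
    have hmid := mt (hends i).1 hi
    have := card_le_cycCount (ℓ := ℓ) hij (B := univ.filter fun t : Fin n => t.val < k + 1)
      fun t ht => by
        rw [mem_filter] at ht
        refine ⟨.inr (Fin.lt_def.2 (by omega)), ?_⟩
        rw [min_eq_left hle]
        exact hlonger hi (.inl ht.2)
    rw [Fin.card_filter_val_lt] at this
    omega
  · by_cases hj : longerCount ℓ j < 2 * k + 2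
    · exact (hvis i j hij.ne ((longerCount_le_of_le hle).trans_lt hj) hj).2
    have hmid := mt (hends j).1 hj
    have := card_le_cycCount (ℓ := ℓ) hij (B := univ.filter fun t : Fin n => n - (k + 1) ≤ t.val)
      fun t ht => by
        rw [mem_filter] at ht
        refine ⟨.inl (Fin.lt_def.2 (by omega)), ?_⟩
        rw [min_eq_right hle]
        exact hlonger hj (.inr ht.2)
    rw [card_filter_sub_le_val (by omega)] at this
    omega

end Curl

/-- curling a linear semi-bar `k`-visibility representation with distinct lengths
into a cylinder yields the same graph iff the top `k+1` and bottom `k+1` bars comprise the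
`2k+2` longest bars and those `2k+2` longest bars are pairwise visible in the linear
representation. -/
theorem stmt8 (k : ℕ) (hn : 2 * k + 2 ≤ n) (ℓ : Fin n → ℝ)
    (hinj : Function.Injective ℓ) :
    (∀ i j : Fin n, LinAdj k ℓ i j ↔ CylAdjF k ℓ i j) ↔
      ((∀ i : Fin n, (i.val < k + 1 ∨ n - (k + 1) ≤ i.val) ↔
          (univ.filter fun v => ℓ i < ℓ v).card < 2 * k + 2) ∧
       (∀ i j : Fin n, i ≠ j →
          (univ.filter fun v => ℓ i < ℓ v).card < 2 * k + 2 →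
          (univ.filter fun v => ℓ j < ℓ v).card < 2 * k + 2 → LinAdj k ℓ i j)) := by
  rw [linAdj_iff_cylAdjF_iff]
  exact ⟨fun h => ⟨h.ends_iff_longerCount_lt hinj hn, fun _ _ => h.linAdj_of_longerCount_lt hinj⟩,
    fun ⟨hends, hvis⟩ => curlingAddsNoEdge_of_ends (by omega) hends hvis⟩
end

section
/- In any maximal (k+2)-quasiplanar convex geometric representation on n points in convex position (a set E of chords with no k+2 pairwise crossing, such that adding any chord creates k+2 pairwise crossing chords), every j-pair with j ≤ k is an edge: if the chord {u,v} has exactly j points of the vertex set strictly on one side with j ≤ k, then {u,v} ∈ E. -/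
open Finset
open scoped Classical

variable {n : ℕ}

/-!
If the `j`-pair `{u, v}` were not an edge, adding it would create `k + 2` pairwise crossing
chords, one of which must be `{u, v}` itself since `G` is `(k + 2)`-quasiplanar. The other
`k + 1` chords all cross `{u, v}`, so each has an endpoint on the side of `{u, v}` holding only
`j ≤ k` vertices, and these endpoints are distinct because crossing chords share no endpoint.
-/

section Chords

variable [NeZero n]

lemma mem_arc_iff_notMem_arc_swap {u v t : ZMod n} (huv : u ≠ v) (htu : t ≠ u) (htv : t ≠ v) :
    t ∈ Arc u v ↔ t ∉ Arc v u := by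
  have : NeZero (v - u) := ⟨sub_ne_zero.mpr huv.symm⟩
  have hvu : (u - v).val = n - (v - u).val := by
    rw [← neg_sub, ZMod.val_neg_of_ne_zero]
  have hsplit : t - u = (t - v) + (v - u) := by ring
  have ha : 0 < (t - u).val := ZMod.val_pos.mpr (sub_ne_zero.mpr htu)
  have hc : 0 < (t - v).val := ZMod.val_pos.mpr (sub_ne_zero.mpr htv)
  have hb : (v - u).val < n := ZMod.val_lt _
  simp only [Arc, mem_filter, mem_univ, true_and, hvu, hc, ha, not_lt]
  rcases lt_or_ge ((t - v).val + (v - u).val) n with h | h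
  · rw [hsplit, ZMod.val_add_of_lt h]; omega
  · rw [hsplit, ZMod.val_add_of_le h]
    have := ZMod.val_lt (t - v)
    omega

lemma Crosses.swap {a b c d : ZMod n} (h : Crosses a b c d) : Crosses b a c d := by
  obtain ⟨hab, hcd, hac, had, hbc, hbd, hx⟩ := h
  refine ⟨hab.symm, hcd, hbc, hbd, hac, had, ?_⟩
  have hx' : Xor (¬c ∈ Arc b a) (¬d ∈ Arc b a) := by
    rwa [← mem_arc_iff_notMem_arc_swap hab hac.symm hbc.symm,
      ← mem_arc_iff_notMem_arc_swap hab had.symm hbd.symm]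
  exact xor_not_not.mp hx'

lemma Crosses.of_sym2_eq {a b a' b' c d : ZMod n} (h : Crosses a b c d)
    (he : s(a, b) = s(a', b')) : Crosses a' b' c d := by
  rcases Sym2.eq_iff.mp he with ⟨rfl, rfl⟩ | ⟨rfl, rfl⟩
  · exact h
  · exact h.swap

/-- Each chord has exactly one endpoint on the arc, and pairwise crossing chords share no
endpoint, so picking that endpoint is injective. -/
lemma card_le_card_arc_of_pairwise_crosses {ι : Type*} {s : Finset ι} {a b : ZMod n}
    {f g : ι → ZMod n} (hab : ∀ q ∈ s, Crosses a b (f q) (g q))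
    (hs : (s : Set ι).Pairwise fun p q => Crosses (f p) (g p) (f q) (g q)) :
    s.card ≤ (Arc a b).card := by
  let e : ι → ZMod n := fun q => if f q ∈ Arc a b then f q else g q
  have he_mem : ∀ q ∈ s, e q ∈ Arc a b := by
    intro q hq
    obtain ⟨-, -, -, -, -, -, hx⟩ := hab q hq
    by_cases hf : f q ∈ Arc a b
    · simp [e, hf]
    · simpa [e, hf] using hx.resolve_left (fun h => hf h.1)
  refine card_le_card_of_injOn e he_mem fun p hp q hq hpq => ?_
  by_contra hne
  obtain ⟨-, -, h₁, h₂, h₃, h₄, -⟩ := hs hp hq hne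
  simp only [e] at hpq
  split_ifs at hpq <;> contradiction

lemma exists_sym2_eq_of_crosses_sup_edge {m : ℕ} {G : SimpleGraph (ZMod n)}
    (hG : QuasiPlanar m G) {u v : ZMod n} {f g : Fin m → ZMod n}
    (hadj : ∀ p, (G ⊔ SimpleGraph.fromEdgeSet {s(u, v)}).Adj (f p) (g p))
    (hcross : ∀ p q, p ≠ q → Crosses (f p) (g p) (f q) (g q)) :
    ∃ p, s(f p, g p) = s(u, v) := by
  by_contra! hne
  refine hG ⟨f, g, fun p => ?_, hcross⟩
  rcases hadj p with h | h
  · exact h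
  · exact absurd (SimpleGraph.fromEdgeSet_adj _ |>.mp h).1 (hne p)

end Chords

/-- in a maximal `(k+2)`-quasiplanar convex geometric representation, every
`j`-pair with `j ≤ k` (a chord with exactly `j` vertices on one open side) is an edge. -/
theorem stmt9 (k : ℕ) [NeZero n] (G : SimpleGraph (ZMod n))
    (hq : QuasiPlanar (k + 2) G) (hmax : MaximalQP (k + 2) G)
    (u v : ZMod n) (huv : u ≠ v) (j : ℕ) (hj : j ≤ k)
    (hpair : (Arc u v).card = j ∨ (Arc v u).card = j) :
    G.Adj u v := by
  by_contra hadj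
  obtain ⟨f, g, hadj', hcross⟩ := not_not.mp (hmax u v huv hadj)
  obtain ⟨p₀, hp₀⟩ := exists_sym2_eq_of_crosses_sup_edge hq hadj' hcross
  set s := univ.erase p₀
  have hs : s.card = k + 1 := by simp [s]
  have hcross_uv : ∀ q ∈ s, Crosses u v (f q) (g q) := fun q hq =>
    (hcross p₀ q (ne_of_mem_erase hq).symm).of_sym2_eq hp₀
  have hpw : (s : Set (Fin (k + 2))).Pairwise fun p q => Crosses (f p) (g p) (f q) (g q) :=
    fun p _ q _ hpq => hcross p q hpq
  rcases hpair with h | h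
  · have := card_le_card_arc_of_pairwise_crosses hcross_uv hpw
    omega
  · have := card_le_card_arc_of_pairwise_crosses (fun q hq => (hcross_uv q hq).swap) hpw
    omega
end

section
/- Every graph with a maximal planar (i.e., 2-quasiplanar) convex geometric representation has a semi-bar visibility (k = 0) representation with semi-bars of different lengths. Combinatorially: if E is a maximal noncrossing set of chords on vertices 1, …, n in convex position, then there exists an injective length function ℓ : {1,…,n} → ℝ such that for all i < j, {i,j} ∈ E iff every t with i < t < j satisfies ℓ(t) < min(ℓ(i), ℓ(j)). -/
open Finset
open scoped Classical

variable {n : ℕ}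

/-- `t` lies strictly between `a` and `b` (vertices `0, …, n-1` in convex position). -/
def BetweenF (a b t : Fin n) : Prop := min a b < t ∧ t < max a b

/-- Chords `{a,b}` and `{c,d}` of the convex polygon cross (all endpoints distinct and the
endpoints interleave). -/
def CrossesF (a b c d : Fin n) : Prop :=
  a ≠ b ∧ c ≠ d ∧ a ≠ c ∧ a ≠ d ∧ b ≠ c ∧ b ≠ d ∧
    Xor' (BetweenF a b c) (BetweenF a b d)

def QuasiPlanarF (m : ℕ) (G : SimpleGraph (Fin n)) : Prop :=
  ¬ ∃ f g : Fin m → Fin n, (∀ p, G.Adj (f p) (g p)) ∧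
      ∀ p q, p ≠ q → CrossesF (f p) (g p) (f q) (g q)

def MaximalQPF (m : ℕ) (G : SimpleGraph (Fin n)) : Prop :=
  ∀ a b : Fin n, a ≠ b → ¬ G.Adj a b →
    ¬ QuasiPlanarF m (G ⊔ SimpleGraph.fromEdgeSet {s(a, b)})

/-! Give each vertex its depth, the number of chords strictly spanning it. Since chords do not
cross, every chord spanning an endpoint of a chord `{a, b}` also spans each vertex strictly
between `a` and `b`, and `{a, b}` itself spans those vertices but not its endpoints; so the
endpoints of a chord are strictly shallower than the vertices inside it. If `{i, j}` is not a
chord, maximality supplies a chord crossing it, and its endpoint inside `(i, j)` is the inner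
endpoint of a chord spanning `i` or `j`, hence shallower than `i` or `j`. So every injective
length function that strictly decreases with depth is a semi-bar visibility representation. -/

section Chords

variable {a b c d a' b' c' d' : Fin n}

lemma crossesF_iff_val :
    CrossesF a b c d ↔ a.val ≠ b.val ∧ c.val ≠ d.val ∧ a.val ≠ c.val ∧ a.val ≠ d.val ∧
      b.val ≠ c.val ∧ b.val ≠ d.val ∧
      Xor (min a.val b.val < c.val ∧ c.val < max a.val b.val)
        (min a.val b.val < d.val ∧ d.val < max a.val b.val) := by
  simp only [CrossesF, BetweenF, Fin.lt_def, Fin.coe_min, Fin.coe_max, Fin.val_ne_iff]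
  rfl

lemma crossesF_of_lt (hac : a < c) (hcb : c < b) (hbd : b < d) : CrossesF a b c d := by
  rw [crossesF_iff_val]
  simp only [Xor, Fin.lt_def] at *
  omega

lemma CrossesF.symm (h : CrossesF a b c d) : CrossesF c d a b := by
  rw [crossesF_iff_val] at *
  simp only [Xor] at *
  omega

lemma CrossesF.congr_sym2 (h : CrossesF a b c d) (hab : s(a, b) = s(a', b'))
    (hcd : s(c, d) = s(c', d')) : CrossesF a' b' c' d' := by
  rcases Sym2.eq_iff.mp hab with ⟨rfl, rfl⟩ | ⟨rfl, rfl⟩ <;>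
    rcases Sym2.eq_iff.mp hcd with ⟨rfl, rfl⟩ | ⟨rfl, rfl⟩ <;>
    rw [crossesF_iff_val] at * <;> simp only [Xor] at * <;> omega

lemma CrossesF.lt_cases (h : CrossesF a b c d) (hab : a < b) (hcd : c < d) :
    (a < c ∧ c < b ∧ b < d) ∨ (c < a ∧ a < d ∧ d < b) := by
  rw [crossesF_iff_val] at h
  simp only [Xor, Fin.lt_def] at *
  omega

end Chords

section Depth

variable {E : SimpleGraph (Fin n)} {a b c d u v : Fin n}

lemma QuasiPlanarF.not_crossesF (hq : QuasiPlanarF 2 E) (hab : E.Adj a b) (hcd : E.Adj c d) :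
    ¬ CrossesF a b c d := by
  refine fun h => hq ⟨![a, c], ![b, d], fun p => ?_, fun p q hpq => ?_⟩
  · fin_cases p <;> assumption
  · fin_cases p <;> fin_cases q <;> first | exact absurd rfl hpq | exact h | exact h.symm

lemma MaximalQPF.exists_crossesF (hq : QuasiPlanarF 2 E) (hmax : MaximalQPF 2 E) (hne : a ≠ b)
    (hnadj : ¬ E.Adj a b) : ∃ c d, E.Adj c d ∧ CrossesF a b c d := by
  obtain ⟨f, g, hadj, hcr⟩ := not_not.mp (hmax a b hne hnadj)
  have hchord : ∀ p, E.Adj (f p) (g p) ∨ s(f p, g p) = s(a, b) := fun p => by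
    have h := hadj p
    simp only [SimpleGraph.sup_adj, SimpleGraph.fromEdgeSet_adj, Set.mem_singleton_iff] at h
    exact h.imp_right And.left
  have h01 := hcr 0 1 (by decide)
  rcases hchord 0 with h0 | h0 <;> rcases hchord 1 with h1 | h1
  · exact absurd h01 (hq.not_crossesF h0 h1)
  · exact ⟨f 0, g 0, h0, h01.symm.congr_sym2 h1 rfl⟩
  · exact ⟨f 1, g 1, h1, h01.congr_sym2 h0 rfl⟩
  · -- `{a, b}` would cross itself
    exact absurd rfl (h01.congr_sym2 h0 h1).2.2.1

lemma QuasiPlanarF.not_adj_of_interleaved (hq : QuasiPlanarF 2 E) (hab : E.Adj a b)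
    (hac : a < c) (hcb : c < b) (hbd : b < d) : ¬ E.Adj c d :=
  fun hcd => hq.not_crossesF hab hcd (crossesF_of_lt hac hcb hbd)

variable (E) in
noncomputable def spanningChords (v : Fin n) : Finset (Fin n × Fin n) :=
  univ.filter fun p => p.1 < v ∧ v < p.2 ∧ E.Adj p.1 p.2

variable (E) in
noncomputable def chordDepth (v : Fin n) : ℕ := (spanningChords E v).card

lemma mem_spanningChords {p : Fin n × Fin n} :
    p ∈ spanningChords E v ↔ p.1 < v ∧ v < p.2 ∧ E.Adj p.1 p.2 := by
  simp [spanningChords]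

lemma chordDepth_lt_chordDepth
    (hspan : ∀ p q, E.Adj p q → p < u → u < q → p < v ∧ v < q)
    (hab : E.Adj a b) (hav : a < v) (hvb : v < b) (hu : ¬ (a < u ∧ u < b)) :
    chordDepth E u < chordDepth E v := by
  have hsub : spanningChords E u ⊆ spanningChords E v := fun p hp => by
    obtain ⟨hpu, hup, hpq⟩ := mem_spanningChords.mp hp
    exact mem_spanningChords.mpr ⟨(hspan _ _ hpq hpu hup).1, (hspan _ _ hpq hpu hup).2, hpq⟩
  refine Finset.card_lt_card ((Finset.ssubset_iff_of_subset hsub).mpr ⟨(a, b), ?_, ?_⟩)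
  · exact mem_spanningChords.mpr ⟨hav, hvb, hab⟩
  · exact fun h => hu ⟨(mem_spanningChords.mp h).1, (mem_spanningChords.mp h).2.1⟩

lemma chordDepth_left_lt (hq : QuasiPlanarF 2 E) (hab : E.Adj a b) (hav : a < v) (hvb : v < b) :
    chordDepth E a < chordDepth E v :=
  chordDepth_lt_chordDepth (fun _ _ hpq hpa haq => ⟨hpa.trans hav, lt_of_not_ge fun hqv =>
    hq.not_adj_of_interleaved hpq hpa haq (hqv.trans_lt hvb) hab⟩) hab hav hvb
    (fun h => h.1.false)

lemma chordDepth_right_lt (hq : QuasiPlanarF 2 E) (hab : E.Adj a b) (hav : a < v) (hvb : v < b) :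
    chordDepth E b < chordDepth E v :=
  chordDepth_lt_chordDepth (fun _ _ hpq hpb hbq => ⟨lt_of_not_ge fun hvp =>
    hq.not_adj_of_interleaved hab (hav.trans_le hvp) hpb hbq hpq, hvb.trans hbq⟩) hab hav hvb
    (fun h => h.2.false)

lemma exists_chordDepth_lt_of_crossesF (hq : QuasiPlanarF 2 E) (hij : u < v)
    (hcd : E.Adj c d) (hcr : CrossesF u v c d) :
    ∃ t, u < t ∧ t < v ∧
      (chordDepth E t < chordDepth E u ∨ chordDepth E t < chordDepth E v) := by
  wlog hcd' : c < d generalizing c d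
  · exact this hcd.symm (hcr.congr_sym2 rfl Sym2.eq_swap)
      (lt_of_le_of_ne (not_lt.mp hcd') (Ne.symm hcr.2.1))
  rcases hcr.lt_cases hij hcd' with ⟨huc, hcv, hvd⟩ | ⟨hcu, hud, hdv⟩
  · exact ⟨c, huc, hcv, Or.inr (chordDepth_left_lt hq hcd hcv hvd)⟩
  · exact ⟨d, hud, hdv, Or.inl (chordDepth_right_lt hq hcd hcu hud)⟩

end Depth

lemma exists_injective_real_reversing_lt (r : Fin n → ℕ) :
    ∃ ℓ : Fin n → ℝ, Function.Injective ℓ ∧ ∀ u v, r u < r v → ℓ v < ℓ u := by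
  -- `r` dominates and the index breaks ties
  set ℓ : Fin n → ℝ := fun v => v.val - n * r v
  have hanti : ∀ u v, r u < r v → ℓ v < ℓ u := fun u v h => by
    have hr : (n : ℝ) * (r u + 1) ≤ n * r v :=
      mul_le_mul_of_nonneg_left (by exact_mod_cast h) (Nat.cast_nonneg n)
    have hv : (v.val : ℝ) < n := by exact_mod_cast v.isLt
    have hu : (0 : ℝ) ≤ u.val := Nat.cast_nonneg _
    simp only [ℓ]
    linarith
  refine ⟨ℓ, fun u v huv => ?_, hanti⟩
  rcases lt_trichotomy (r u) (r v) with h | h | h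
  · exact absurd huv (hanti u v h).ne'
  · simp only [ℓ, h, sub_left_inj, Nat.cast_inj] at huv
    exact Fin.ext huv
  · exact absurd huv (hanti v u h).ne

/-- every maximal planar (2-quasiplanar) convex geometric representation has a
semi-bar visibility (`k = 0`) representation with semi-bars of different lengths. -/
theorem stmt10 (E : SimpleGraph (Fin n)) (hq : QuasiPlanarF 2 E) (hmax : MaximalQPF 2 E) :
    ∃ ℓ : Fin n → ℝ, Function.Injective ℓ ∧
      ∀ i j : Fin n, i < j →
        (E.Adj i j ↔ ∀ t : Fin n, i < t → t < j → ℓ t < min (ℓ i) (ℓ j)) := by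
  obtain ⟨ℓ, hinj, hanti⟩ := exists_injective_real_reversing_lt (chordDepth E)
  refine ⟨ℓ, hinj, fun i j hij => ⟨fun hadj t hit htj => ?_, fun hvis => ?_⟩⟩
  · exact lt_min (hanti _ _ (chordDepth_left_lt hq hadj hit htj))
      (hanti _ _ (chordDepth_right_lt hq hadj hit htj))
  · by_contra hnadj
    obtain ⟨c, d, hcd, hcr⟩ := hmax.exists_crossesF hq hij.ne hnadj
    obtain ⟨t, hit, htj, hshallow⟩ := exists_chordDepth_lt_of_crossesF hq hij hcd hcr
    have hvis_t := hvis t hit htj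
    rcases hshallow with h | h
    · exact (hanti _ _ h).not_gt (hvis_t.trans_le (min_le_left _ _))
    · exact (hanti _ _ h).not_gt (hvis_t.trans_le (min_le_right _ _))
end

section
/- Every (2k+2)-degenerate graph with a maximal (k+2)-quasiplanar convex geometric representation has a cylindrical semi-bar k-visibility representation with semi-bars of different lengths, preserving the cyclic order of vertices. Combinatorially: if E is a maximal (k+2)-quasiplanar set of chords on ZMod n and the graph (ZMod n, E) is (2k+2)-degenerate, then there exists an injective ℓ : ZMod n → ℝ such that for all i ≠ j, {i,j} ∈ E iff on one of the two cyclic open arcs between i and j, at most k vertices t have ℓ(t) > min(ℓ(i), ℓ(j)). -/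
/-! The vertices are peeled off in a degeneracy order and each vertex gets a bar shorter than
every vertex peeled later, so an edge `ij` with `i` peeled first is counted against the vertices
still present when `i` is removed. The invariant along the peeling is that the current vertex set
`S` stays maximal: every non-edge inside `S` is crossed by `k + 1` pairwise crossing edges inside
`S`. Maximality makes every chord with at most `k` vertices of `S` on one side an edge, and
pairwise crossing chords have at least `k + 1` vertices of `S` on both sides. A vertex of degree
at most `2k + 2` in `S` is therefore adjacent to the `k + 1` nearest vertices of `S` on either side
and to nothing else: its edges are exactly its chords that are short on one side, and no crossing
family uses it, so removing it keeps `S` maximal. -/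

open Finset
open scoped Classical

variable {n : ℕ}

section Arc

variable [NeZero n]

lemma mem_Arc {i j t : ZMod n} :
    t ∈ Arc i j ↔ 0 < (t - i).val ∧ (t - i).val < (j - i).val := by
  simp [Arc]

lemma left_notMem_Arc {i j : ZMod n} : i ∉ Arc i j := by
  simp [mem_Arc]

lemma right_notMem_Arc {i j : ZMod n} : j ∉ Arc i j := by
  simp [mem_Arc]

lemma ne_left_of_mem_Arc {i j t : ZMod n} (h : t ∈ Arc i j) : t ≠ i :=
  fun hti => left_notMem_Arc (hti ▸ h)

lemma ne_right_of_mem_Arc {i j t : ZMod n} (h : t ∈ Arc i j) : t ≠ j :=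
  fun htj => right_notMem_Arc (htj ▸ h)

lemma val_sub_eq_ite (x y : ZMod n) :
    (x - y).val = if y.val ≤ x.val then x.val - y.val else x.val + n - y.val := by
  split_ifs with h
  · exact ZMod.val_sub h
  · have hyx : y - x ≠ 0 := fun h0 => h ((congrArg ZMod.val (sub_eq_zero.1 h0)).le)
    have : NeZero (y - x) := ⟨hyx⟩
    rw [← neg_sub, ZMod.val_neg_of_ne_zero, ZMod.val_sub (by omega)]
    have := ZMod.val_lt y
    omega

lemma mem_Arc_iff_notMem_Arc_swap {a b c : ZMod n} (hab : a ≠ b) (hca : c ≠ a) (hcb : c ≠ b) :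
    c ∈ Arc a b ↔ c ∉ Arc b a := by
  have hx := ZMod.val_pos.2 (sub_ne_zero.2 hca)
  have hy := ZMod.val_pos.2 (sub_ne_zero.2 hab.symm)
  have hxn := ZMod.val_lt (c - a)
  have hxy : (c - a).val ≠ (b - a).val := fun h => hcb (sub_left_inj.1 (ZMod.val_injective n h))
  rw [mem_Arc, mem_Arc, show c - b = (c - a) - (b - a) by ring,
    show a - b = 0 - (b - a) by ring, val_sub_eq_ite (c - a), val_sub_eq_ite 0, ZMod.val_zero]
  split_ifs <;> omega

lemma Arc_subset_Arc {v a b : ZMod n} (h : a ∈ Arc v b) : Arc v a ⊆ Arc v b := by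
  intro t ht
  rw [mem_Arc] at h ht ⊢
  omega

lemma mem_Arc_or_mem_Arc {v u u' : ZMod n} (hu : u ≠ v) (hu' : u' ≠ v) (huu' : u ≠ u') :
    u ∈ Arc v u' ∨ u' ∈ Arc v u := by
  have h := ZMod.val_pos.2 (sub_ne_zero.2 hu)
  have h' := ZMod.val_pos.2 (sub_ne_zero.2 hu')
  have hne : (u - v).val ≠ (u' - v).val := fun h => huu' (sub_left_inj.1 (ZMod.val_injective n h))
  rw [mem_Arc, mem_Arc]
  omega

end Arc

section Crossing

variable [NeZero n]

def PairwiseCrosses {m : ℕ} (f g : Fin m → ZMod n) : Prop :=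
  ∀ p q, p ≠ q → Crosses (f p) (g p) (f q) (g q)

lemma Crosses.swap_left {a b c d : ZMod n} (h : Crosses b a c d) : Crosses a b c d := by
  obtain ⟨hba, hcd, hbc, hbd, hac, had, hxor⟩ := h
  refine ⟨hba.symm, hcd, hac, had, hbc, hbd, ?_⟩
  rw [mem_Arc_iff_notMem_Arc_swap hba.symm hac.symm hbc.symm,
    mem_Arc_iff_notMem_Arc_swap hba.symm had.symm hbd.symm]
  exact xor_not_not.2 hxor

lemma le_card_Arc_inter_of_crosses {m : ℕ} {x y : ZMod n} {S : Finset (ZMod n)}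
    {f g : Fin m → ZMod n} (hS : ∀ p, f p ∈ S ∧ g p ∈ S) (hxy : ∀ p, Crosses x y (f p) (g p))
    (hpw : PairwiseCrosses f g) : m ≤ #(Arc x y ∩ S) := by
  -- each chord has exactly one endpoint on the arc, and distinct chords share no endpoint
  let e p := if f p ∈ Arc x y then f p else g p
  have he : ∀ p, e p ∈ Arc x y ∩ S := by
    intro p
    have hxor := (hxy p).2.2.2.2.2.2
    by_cases h : f p ∈ Arc x y
    · simpa [e, h] using (hS p).1
    · simp only [e, if_neg h, mem_inter]
      exact ⟨hxor.resolve_left (by tauto) |>.1, (hS p).2⟩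
  have he_inj : Function.Injective e := by
    intro p q hpq
    by_contra hne
    obtain ⟨-, -, h1, h2, h3, h4, -⟩ := hpw p q hne
    simp only [e] at hpq
    split_ifs at hpq <;> contradiction
  simpa using card_le_card_of_injOn (s := univ) e (fun p _ => he p) he_inj.injOn

lemma le_card_Arc_inter_of_pairwiseCrosses {m : ℕ} {S : Finset (ZMod n)}
    {f g : Fin (m + 1) → ZMod n} (hS : ∀ p, f p ∈ S ∧ g p ∈ S) (hpw : PairwiseCrosses f g)
    (p : Fin (m + 1)) : m ≤ #(Arc (f p) (g p) ∩ S) ∧ m ≤ #(Arc (g p) (f p) ∩ S) := by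
  have hS' q := hS (p.succAbove q)
  have hpw' : PairwiseCrosses (f ∘ p.succAbove) (g ∘ p.succAbove) :=
    fun q r hqr => hpw _ _ (Fin.succAbove_right_injective.ne hqr)
  have hcross q : Crosses (f p) (g p) (f (p.succAbove q)) (g (p.succAbove q)) :=
    hpw _ _ (Fin.succAbove_ne p q).symm
  exact ⟨le_card_Arc_inter_of_crosses hS' hcross hpw',
    le_card_Arc_inter_of_crosses hS' (fun q => (hcross q).swap_left) hpw'⟩

end Crossing

lemma card_filter_mem_of_injOn {α : Type*} {s : Finset α} {f : α → ℕ} (hf : Set.InjOn f s)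
    (hlt : ∀ x ∈ s, f x < #s) {I : Finset ℕ} (hI : I ⊆ range #s) :
    #(s.filter (f · ∈ I)) = #I := by
  have himage : s.image f = range #s :=
    eq_of_subset_of_card_le (fun y hy => by
      obtain ⟨x, hx, rfl⟩ := mem_image.1 hy
      exact mem_range.2 (hlt x hx)) (by rw [card_range, card_image_of_injOn hf])
  rw [← card_image_of_injOn (hf.mono (filter_subset _ s)), ← filter_image (p := (· ∈ I)), himage,
    filter_mem_eq_inter, inter_eq_right.2 hI]

section Counting

variable [NeZero n] {S : Finset (ZMod n)}

lemma card_Arc_inter_add_card_Arc_inter {u v : ZMod n} (hu : u ∈ S) (hv : v ∈ S) (huv : u ≠ v) :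
    #(Arc u v ∩ S) + #(Arc v u ∩ S) + 2 = #S := by
  have hfilter : ((S.erase u).erase v).filter (· ∈ Arc u v) = Arc u v ∩ S := by
    ext t
    simp only [mem_filter, mem_erase, mem_inter]
    constructor
    · tauto
    · exact fun h => ⟨⟨ne_right_of_mem_Arc h.1, ne_left_of_mem_Arc h.1, h.2⟩, h.1⟩
  have hfilter_not : ((S.erase u).erase v).filter (· ∉ Arc u v) = Arc v u ∩ S := by
    ext t
    simp only [mem_filter, mem_erase, mem_inter]
    constructor
    · rintro ⟨⟨htv, htu, ht⟩, htArc⟩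
      exact ⟨(mem_Arc_iff_notMem_Arc_swap huv.symm htv htu).2 htArc, ht⟩
    · rintro ⟨htArc, ht⟩
      have htv := ne_left_of_mem_Arc htArc
      have htu := ne_right_of_mem_Arc htArc
      exact ⟨⟨htv, htu, ht⟩, (mem_Arc_iff_notMem_Arc_swap huv.symm htv htu).1 htArc⟩
  have hsplit := card_filter_add_card_filter_not (s := (S.erase u).erase v) (· ∈ Arc u v)
  rw [hfilter, hfilter_not] at hsplit
  have h1 := card_erase_add_one (mem_erase.2 ⟨huv.symm, hv⟩)
  have h2 := card_erase_add_one hu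
  omega

lemma card_Arc_inter_lt_of_mem_Arc {v u u' : ZMod n} (hu : u ∈ S) (h : u ∈ Arc v u') :
    #(Arc v u ∩ S) < #(Arc v u' ∩ S) := by
  refine card_lt_card ((ssubset_iff_of_subset (inter_subset_inter_right (Arc_subset_Arc h))).2 ?_)
  exact ⟨u, mem_inter.2 ⟨h, hu⟩, fun h' => right_notMem_Arc (mem_inter.1 h').1⟩

lemma injOn_card_Arc_inter (v : ZMod n) :
    Set.InjOn (fun u => #(Arc v u ∩ S)) (S.erase v) := by
  intro u hu u' hu' h
  simp only [coe_erase, Set.mem_sdiff, mem_coe, Set.mem_singleton_iff] at hu hu'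
  by_contra huu'
  rcases mem_Arc_or_mem_Arc hu.2 hu'.2 huu' with h' | h'
  · exact (card_Arc_inter_lt_of_mem_Arc hu.1 h').ne h
  · exact (card_Arc_inter_lt_of_mem_Arc hu'.1 h').ne h.symm

lemma card_filter_card_Arc_inter_le {v : ZMod n} (hv : v ∈ S) {k : ℕ} (hk : k < #(S.erase v)) :
    #((S.erase v).filter fun u => #(Arc v u ∩ S) ≤ k) = k + 1 ∧
      #((S.erase v).filter fun u => #(Arc u v ∩ S) ≤ k) = k + 1 := by
  set N := #(S.erase v)
  have hN : N + 1 = #S := card_erase_add_one hv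
  have hsum : ∀ u ∈ S.erase v, #(Arc v u ∩ S) + #(Arc u v ∩ S) + 2 = #S := fun u hu =>
    card_Arc_inter_add_card_Arc_inter hv (mem_of_mem_erase hu) (ne_of_mem_erase hu).symm
  have hlt : ∀ u ∈ S.erase v, #(Arc v u ∩ S) < N := fun u hu => by
    have := hsum u hu
    omega
  -- the rank `#(Arc v u ∩ S)` is a bijection from `S.erase v` onto `range N`
  have hcount {I : Finset ℕ} (hI : I ⊆ range N) :=
    card_filter_mem_of_injOn (injOn_card_Arc_inter v) hlt hI
  constructor
  · rw [← card_range (k + 1), ← hcount (range_subset_range.2 hk)]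
    exact congrArg card (filter_congr fun u _ => by rw [mem_range, Nat.lt_succ_iff])
  · rw [show k + 1 = #(Ico (N - 1 - k) N) by rw [Nat.card_Ico]; omega,
      ← hcount fun r hr => mem_range.2 (mem_Ico.1 hr).2]
    refine congrArg card (filter_congr fun u hu => ?_)
    have := hsum u hu
    rw [mem_Ico]
    omega

end Counting

section Maximal

variable [NeZero n]

def MaximalOn (m : ℕ) (E : SimpleGraph (ZMod n)) (S : Finset (ZMod n)) : Prop :=
  ∀ a ∈ S, ∀ b ∈ S, a ≠ b → ¬ E.Adj a b → ∃ f g : Fin m → ZMod n,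
    (∀ p, f p ∈ S ∧ g p ∈ S ∧ (E ⊔ SimpleGraph.fromEdgeSet {s(a, b)}).Adj (f p) (g p)) ∧
      PairwiseCrosses f g

variable {k : ℕ} {E : SimpleGraph (ZMod n)} {S : Finset (ZMod n)}

lemma maximalOn_univ {m : ℕ} (hmax : MaximalQP m E) : MaximalOn m E univ := by
  intro a _ b _ hab hnadj
  obtain ⟨f, g, hadj, hpw⟩ := not_not.1 (hmax a b hab hnadj)
  exact ⟨f, g, fun p => ⟨mem_univ _, mem_univ _, hadj p⟩, hpw⟩

lemma adj_of_card_Arc_inter_le (hq : QuasiPlanar (k + 2) E) (hM : MaximalOn (k + 2) E S)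
    {a b : ZMod n} (ha : a ∈ S) (hb : b ∈ S) (hab : a ≠ b)
    (h : #(Arc a b ∩ S) ≤ k ∨ #(Arc b a ∩ S) ≤ k) : E.Adj a b := by
  by_contra hnadj
  obtain ⟨f, g, hfg, hpw⟩ := hM a ha b hb hab hnadj
  obtain ⟨p, hp⟩ : ∃ p, ¬ E.Adj (f p) (g p) := by
    by_contra! hE
    exact hq ⟨f, g, hE, hpw⟩
  have hpab : s(f p, g p) = s(a, b) := by
    have hadj := (hfg p).2.2
    rw [SimpleGraph.sup_adj, SimpleGraph.fromEdgeSet_adj] at hadj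
    exact (hadj.resolve_left hp).1
  have hlong := le_card_Arc_inter_of_pairwiseCrosses (fun q => ⟨(hfg q).1, (hfg q).2.1⟩) hpw p
  rcases Sym2.eq_iff.1 hpab with ⟨hfa, hgb⟩ | ⟨hfb, hga⟩
  · rw [hfa, hgb] at hlong
    omega
  · rw [hfb, hga] at hlong
    omega

lemma card_Arc_inter_le_of_adj (hq : QuasiPlanar (k + 2) E) (hM : MaximalOn (k + 2) E S)
    {v j : ZMod n} (hv : v ∈ S) (hdeg : #(S.filter fun u => E.Adj v u) ≤ 2 * k + 2)
    (hj : j ∈ S) (hadj : E.Adj v j) : #(Arc v j ∩ S) ≤ k ∨ #(Arc j v ∩ S) ≤ k := by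
  by_contra! hlong
  have hjsum := card_Arc_inter_add_card_Arc_inter hv hj hadj.ne
  have hN := card_erase_add_one hv
  -- `v` is adjacent to the `k + 1` nearest vertices of `S` on either side, and to `j`
  obtain ⟨hA, hB⟩ := card_filter_card_Arc_inter_le hv (k := k) (by omega)
  set A := (S.erase v).filter fun u => #(Arc v u ∩ S) ≤ k
  set B := (S.erase v).filter fun u => #(Arc u v ∩ S) ≤ k
  have hAB : Disjoint A B := disjoint_filter.2 fun u hu hleft hright => by
    have := card_Arc_inter_add_card_Arc_inter hv (mem_of_mem_erase hu) (ne_of_mem_erase hu).symm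
    omega
  have hjAB : j ∉ A ∪ B := by
    simp only [A, B, mem_union, mem_filter]
    omega
  have hsub : insert j (A ∪ B) ⊆ S.filter fun u => E.Adj v u := by
    intro u hu
    rcases mem_insert.1 hu with rfl | hu
    · exact mem_filter.2 ⟨hj, hadj⟩
    simp only [A, B, mem_union, mem_filter, ← and_or_left] at hu
    exact mem_filter.2 ⟨mem_of_mem_erase hu.1,
      adj_of_card_Arc_inter_le hq hM hv (mem_of_mem_erase hu.1) (ne_of_mem_erase hu.1).symm hu.2⟩
  have hcard := card_le_card hsub
  rw [card_insert_of_notMem hjAB, card_union_of_disjoint hAB] at hcard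
  omega

lemma adj_iff_card_Arc_inter_le (hq : QuasiPlanar (k + 2) E) (hM : MaximalOn (k + 2) E S)
    {v j : ZMod n} (hv : v ∈ S) (hdeg : #(S.filter fun u => E.Adj v u) ≤ 2 * k + 2)
    (hj : j ∈ S) (hjv : j ≠ v) : E.Adj v j ↔ #(Arc v j ∩ S) ≤ k ∨ #(Arc j v ∩ S) ≤ k :=
  ⟨card_Arc_inter_le_of_adj hq hM hv hdeg hj, adj_of_card_Arc_inter_le hq hM hv hj hjv.symm⟩

lemma maximalOn_erase (hq : QuasiPlanar (k + 2) E) (hM : MaximalOn (k + 2) E S) {v : ZMod n}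
    (hv : v ∈ S) (hdeg : #(S.filter fun u => E.Adj v u) ≤ 2 * k + 2) :
    MaximalOn (k + 2) E (S.erase v) := by
  intro a ha b hb hab hnadj
  obtain ⟨f, g, hfg, hpw⟩ := hM a (mem_of_mem_erase ha) b (mem_of_mem_erase hb) hab hnadj
  have hlong := le_card_Arc_inter_of_pairwiseCrosses (fun q => ⟨(hfg q).1, (hfg q).2.1⟩) hpw
  have hne_of_adj {x y : ZMod n} (hy : y ∈ S) (hxy : E.Adj x y)
      (h : k + 1 ≤ #(Arc x y ∩ S) ∧ k + 1 ≤ #(Arc y x ∩ S)) : x ≠ v := by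
    rintro rfl
    have := card_Arc_inter_le_of_adj hq hM hv hdeg hy hxy
    omega
  have hne p : f p ≠ v ∧ g p ≠ v := by
    obtain ⟨hf, hg, hadj⟩ := hfg p
    rcases (SimpleGraph.sup_adj _ _ _ _).1 hadj with hE | hab'
    · exact ⟨hne_of_adj hg hE (hlong p), hne_of_adj hf hE.symm (hlong p).symm⟩
    · have hav := ne_of_mem_erase ha
      have hbv := ne_of_mem_erase hb
      rw [SimpleGraph.fromEdgeSet_adj, Set.mem_singleton_iff, Sym2.eq_iff] at hab'
      rcases hab'.1 with ⟨rfl, rfl⟩ | ⟨rfl, rfl⟩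
      exacts [⟨hav, hbv⟩, ⟨hbv, hav⟩]
  exact ⟨f, g, fun p => ⟨mem_erase.2 ⟨(hne p).1, (hfg p).1⟩, mem_erase.2 ⟨(hne p).2, (hfg p).2.1⟩,
    (hfg p).2.2⟩, hpw⟩

end Maximal

section Representation

variable [NeZero n]

noncomputable def exceedCountOn (S : Finset (ZMod n)) (ℓ : ZMod n → ℝ) (i j : ZMod n) : ℕ :=
  #((Arc i j ∩ S).filter fun t => min (ℓ i) (ℓ j) < ℓ t)

def RepresentsOn (k : ℕ) (E : SimpleGraph (ZMod n)) (S : Finset (ZMod n)) (ℓ : ZMod n → ℝ) :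
    Prop :=
  ∀ i ∈ S, ∀ j ∈ S, i ≠ j → (E.Adj i j ↔ exceedCountOn S ℓ i j ≤ k ∨ exceedCountOn S ℓ j i ≤ k)

variable {k : ℕ} {E : SimpleGraph (ZMod n)}

lemma exceedCountOn_univ (ℓ : ZMod n → ℝ) (i j : ZMod n) :
    exceedCountOn univ ℓ i j = exceedCount ℓ i j := by
  simp [exceedCountOn, exceedCount]

lemma exceedCountOn_eq_card {S : Finset (ZMod n)} {ℓ : ZMod n → ℝ} {i j : ZMod n}
    (h : ∀ t ∈ Arc i j ∩ S, min (ℓ i) (ℓ j) < ℓ t) : exceedCountOn S ℓ i j = #(Arc i j ∩ S) := by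
  rw [exceedCountOn, filter_true_of_mem h]

lemma exceedCountOn_erase {S : Finset (ZMod n)} {ℓ : ZMod n → ℝ} {i j v : ZMod n}
    (hv : ℓ v ≤ min (ℓ i) (ℓ j)) : exceedCountOn (S.erase v) ℓ i j = exceedCountOn S ℓ i j := by
  rw [exceedCountOn, exceedCountOn]
  congr 1
  ext t
  simp only [mem_filter, mem_inter, mem_erase]
  constructor
  · tauto
  · rintro ⟨⟨ht, htS⟩, hlt⟩
    exact ⟨⟨ht, fun htv => (hv.trans_lt hlt).ne (congrArg ℓ htv.symm), htS⟩, hlt⟩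

lemma exceedCountOn_congr {S : Finset (ZMod n)} {ℓ ℓ' : ZMod n → ℝ} {i j : ZMod n}
    (h : Set.EqOn ℓ ℓ' S) (hi : i ∈ S) (hj : j ∈ S) :
    exceedCountOn S ℓ i j = exceedCountOn S ℓ' i j := by
  rw [exceedCountOn, exceedCountOn, h hi, h hj]
  exact congrArg card (filter_congr fun t ht => by rw [h (mem_inter.1 ht).2])

lemma RepresentsOn.congr {S : Finset (ZMod n)} {ℓ ℓ' : ZMod n → ℝ} (hrep : RepresentsOn k E S ℓ)
    (h : Set.EqOn ℓ ℓ' S) : RepresentsOn k E S ℓ' := by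
  intro i hi j hj hij
  rw [hrep i hi j hj hij, exceedCountOn_congr h hi hj, exceedCountOn_congr h hj hi]

/-- The shortest bar `v` is counted by no other pair, while for its own pairs every vertex of `S`
is counted, so `adj_iff_card_Arc_inter_le` applies. -/
lemma RepresentsOn.of_erase {S : Finset (ZMod n)} {ℓ : ZMod n → ℝ} {v : ZMod n}
    (hq : QuasiPlanar (k + 2) E) (hM : MaximalOn (k + 2) E S) (hv : v ∈ S)
    (hdeg : #(S.filter fun u => E.Adj v u) ≤ 2 * k + 2)
    (hrep : RepresentsOn k E (S.erase v) ℓ) (hmin : ∀ u ∈ S.erase v, ℓ v < ℓ u) :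
    RepresentsOn k E S ℓ := by
  have hvisible {i j : ZMod n} (hij : i = v ∨ j = v) :
      exceedCountOn S ℓ i j = #(Arc i j ∩ S) := by
    refine exceedCountOn_eq_card fun t ht => ?_
    have htv : t ≠ v := by
      rcases hij with rfl | rfl
      exacts [ne_left_of_mem_Arc (mem_inter.1 ht).1, ne_right_of_mem_Arc (mem_inter.1 ht).1]
    have := hmin t (mem_erase.2 ⟨htv, (mem_inter.1 ht).2⟩)
    rcases hij with rfl | rfl
    exacts [min_lt_of_left_lt this, min_lt_of_right_lt this]
  have hfirst {j : ZMod n} (hj : j ∈ S) (hjv : j ≠ v) :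
      E.Adj v j ↔ exceedCountOn S ℓ v j ≤ k ∨ exceedCountOn S ℓ j v ≤ k := by
    rw [hvisible (Or.inl rfl), hvisible (Or.inr rfl)]
    exact adj_iff_card_Arc_inter_le hq hM hv hdeg hj hjv
  intro i hi j hj hij
  by_cases hiv : i = v
  · subst hiv
    exact hfirst hj (Ne.symm hij)
  by_cases hjv : j = v
  · subst hjv
    rw [E.adj_comm, or_comm]
    exact hfirst hi hij
  have hi' := mem_erase.2 ⟨hiv, hi⟩
  have hj' := mem_erase.2 ⟨hjv, hj⟩
  have hvij : ℓ v ≤ min (ℓ i) (ℓ j) := le_min (hmin i hi').le (hmin j hj').le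
  rw [hrep i hi' j hj' hij, exceedCountOn_erase hvij, exceedCountOn_erase (min_comm (ℓ i) _ ▸ hvij)]

theorem exists_injOn_representsOn (hq : QuasiPlanar (k + 2) E)
    (hdeg : ∀ S : Finset (ZMod n), S.Nonempty →
        ∃ v ∈ S, (S.filter fun u => E.Adj v u).card ≤ 2 * k + 2)
    (S : Finset (ZMod n)) (hM : MaximalOn (k + 2) E S) :
    ∃ ℓ : ZMod n → ℝ, Set.InjOn ℓ S ∧ RepresentsOn k E S ℓ := by
  induction S using Finset.strongInduction with
  | H S ih =>
  rcases S.eq_empty_or_nonempty with rfl | hne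
  · exact ⟨0, by simp, by simp [RepresentsOn]⟩
  obtain ⟨v, hv, hvdeg⟩ := hdeg S hne
  obtain ⟨ℓ', hinj, hrep⟩ := ih _ (erase_ssubset hv) (maximalOn_erase hq hM hv hvdeg)
  set ℓ := Function.update ℓ' v (-1 - ∑ u ∈ S.erase v, |ℓ' u|)
  have heq : Set.EqOn ℓ' ℓ (S.erase v) := fun u hu =>
    (Function.update_of_ne (ne_of_mem_erase hu) _ _).symm
  have hℓv : ℓ v = -1 - ∑ u ∈ S.erase v, |ℓ' u| := Function.update_self _ _ _
  have hmin : ∀ u ∈ S.erase v, ℓ v < ℓ u := fun u hu => by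
    rw [← heq hu, hℓv]
    linarith [neg_abs_le (ℓ' u), single_le_sum (fun w _ => abs_nonneg (ℓ' w)) hu]
  refine ⟨ℓ, ?_, (hrep.congr heq).of_erase hq hM hv hvdeg hmin⟩
  rw [← insert_erase hv, coe_insert, Set.injOn_insert (by simp)]
  exact ⟨hinj.congr heq, fun ⟨u, hu, hvu⟩ => (hmin u hu).ne' hvu⟩

end Representation

/-- every `(2k+2)`-degenerate graph with a maximal `(k+2)`-quasiplanar convex
geometric representation has a cylindrical semi-bar `k`-visibility representation with
semi-bars of different lengths, preserving the cyclic order of the vertices. -/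
theorem stmt12 (k : ℕ) [NeZero n] (E : SimpleGraph (ZMod n))
    (hq : QuasiPlanar (k + 2) E) (hmax : MaximalQP (k + 2) E)
    (hdeg : ∀ S : Finset (ZMod n), S.Nonempty →
        ∃ v ∈ S, (S.filter fun u => E.Adj v u).card ≤ 2 * k + 2) :
    ∃ ℓ : ZMod n → ℝ, Function.Injective ℓ ∧ E = CylGraph k ℓ := by
  obtain ⟨ℓ, hinj, hrep⟩ := exists_injOn_representsOn hq hdeg univ (maximalOn_univ hmax)
  refine ⟨ℓ, by simpa using hinj, ?_⟩
  ext i j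
  by_cases hij : i = j
  · subst hij
    simp [CylGraph]
  · rw [hrep i (mem_univ i) j (mem_univ j) hij, exceedCountOn_univ, exceedCountOn_univ]
    simp [CylGraph, hij]
end

section
/- In a cylindrical semi-bar k-visibility representation with injective lengths, any 2k+2 bars whose lengths are the 2k+2 largest are pairwise adjacent, i.e., the 2k+2 longest semi-bars form a clique. -/
open Finset
open scoped Classical

variable {n : ℕ}

/-!
The two open arcs between `i` and `j` are disjoint, so together they contain at most as many
bars longer than `min (ℓ i) (ℓ j)` as there are in total. That total is `ℓ i`'s or `ℓ j`'s count of
longer bars, hence at most `2k+1`, and one of the two arcs carries at most `k` of them.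
-/

lemma disjoint_arc_swap [NeZero n] (i j : ZMod n) : Disjoint (Arc i j) (Arc j i) := by
  rw [disjoint_left]
  intro t ht_ij ht_ji
  simp only [Arc, mem_filter, mem_univ, true_and] at ht_ij ht_ji
  have : NeZero (j - i) := ⟨fun h => by simp [h] at ht_ij⟩
  have hneg : (i - j).val = n - (j - i).val := by rw [← neg_sub, ZMod.val_neg_of_ne_zero]
  have hadd : (t - i).val = ((t - j).val + (j - i).val) % n := by
    rw [← ZMod.val_add, sub_add_sub_cancel]
  have hlt : (j - i).val < n := ZMod.val_lt _
  -- on the arc from `j` to `i`, `(t - j).val + (j - i).val < (i - j).val + (j - i).val = n`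
  rw [Nat.mod_eq_of_lt (by omega)] at hadd
  omega

lemma exceedCount_add_exceedCount_swap_le [NeZero n] (ℓ : ZMod n → ℝ) (i j : ZMod n) :
    exceedCount ℓ i j + exceedCount ℓ j i ≤ #(univ.filter fun v => min (ℓ i) (ℓ j) < ℓ v) := by
  rw [exceedCount, exceedCount, min_comm (ℓ j), ← card_union_of_disjoint
    ((disjoint_arc_swap i j).mono (filter_subset _ _) (filter_subset _ _)), ← filter_union]
  exact card_le_card (filter_subset_filter _ (subset_univ _))

lemma CylGraph.adj_of_card_lt [NeZero n] (k : ℕ) (ℓ : ZMod n → ℝ) {i j : ZMod n} (hij : i ≠ j)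
    (hcard : #(univ.filter fun v => min (ℓ i) (ℓ j) < ℓ v) < 2 * k + 2) :
    (CylGraph k ℓ).Adj i j := by
  have := exceedCount_add_exceedCount_swap_le ℓ i j
  exact ⟨hij, by omega⟩

theorem stmt15_general (k : ℕ) [NeZero n] (ℓ : ZMod n → ℝ) :
    ∀ i j : ZMod n, i ≠ j →
      (univ.filter fun v => ℓ i < ℓ v).card < 2 * k + 2 →
      (univ.filter fun v => ℓ j < ℓ v).card < 2 * k + 2 →
      (CylGraph k ℓ).Adj i j := by
  intro i j hij hi hj
  apply CylGraph.adj_of_card_lt k ℓ hij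
  rcases min_choice (ℓ i) (ℓ j) with h | h <;> rw [h] <;> assumption

/-- in a cylindrical semi-bar `k`-visibility representation with distinct
lengths, the `2k+2` longest semi-bars are pairwise adjacent (form a clique). -/
theorem stmt15 (k : ℕ) [NeZero n] (hn : 2 * k + 2 ≤ n) (ℓ : ZMod n → ℝ)
    (hinj : Function.Injective ℓ) :
    ∀ i j : ZMod n, i ≠ j →
      (univ.filter fun v => ℓ i < ℓ v).card < 2 * k + 2 →
      (univ.filter fun v => ℓ j < ℓ v).card < 2 * k + 2 →
      (CylGraph k ℓ).Adj i j :=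
  stmt15_general k ℓ
end

section
/- In a (linear) semi-bar k-visibility representation with distinct lengths on bars 1, …, n (bottom to top), the shortest bar in any nonempty subset S of bars is visible (within the full representation) to at most 2k+2 bars of S; consequently, semi-bar k-visibility graphs with distinct lengths are (2k+2)-degenerate. -/
open Finset
open scoped Classical

variable {n : ℕ}

lemma right_le (k : ℕ) (ℓ : Fin n → ℝ) (hinj : Function.Injective ℓ)
    (S : Finset (Fin n)) (i : Fin n) (hmin : ∀ j ∈ S, ℓ i ≤ ℓ j) :
    (S.filter fun j => LinAdj k ℓ i j ∧ i < j).card ≤ k + 1 := by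
  by_contra h
  push_neg at h
  set T := S.filter fun j => LinAdj k ℓ i j ∧ i < j with hT
  have hTne : T.Nonempty := card_pos.mp (by omega)
  set j := T.max' hTne with hj
  have hjT : j ∈ T := T.max'_mem hTne
  rw [hT, mem_filter] at hjT
  obtain ⟨hjS, ⟨hij, hcnt⟩, hlt⟩ := hjT
  have hsub : T.erase j ⊆ univ.filter fun t =>
      min i j < t ∧ t < max i j ∧ min (ℓ i) (ℓ j) < ℓ t := by
    intro t ht
    rw [mem_erase] at ht
    obtain ⟨htj, htT⟩ := ht
    rw [hT, mem_filter] at htT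
    obtain ⟨htS, ⟨hti, _⟩, hit⟩ := htT
    have htlej : t ≤ j := T.le_max' t (by rw [hT, mem_filter]; exact ⟨htS, ⟨hti, ‹_›⟩, hit⟩)
    rw [mem_filter]
    refine ⟨mem_univ _, ?_, ?_, ?_⟩
    · rw [min_eq_left hlt.le]; exact hit
    · rw [max_eq_right hlt.le]; exact lt_of_le_of_ne htlej htj
    · rw [min_eq_left (hmin j hjS)]
      exact lt_of_le_of_ne (hmin t htS) (fun heq => (ne_of_lt hit) (hinj heq))
  have hc := card_le_card hsub
  rw [card_erase_of_mem (T.max'_mem hTne)] at hc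
  unfold btwCount at hcnt
  omega

lemma left_le (k : ℕ) (ℓ : Fin n → ℝ) (hinj : Function.Injective ℓ)
    (S : Finset (Fin n)) (i : Fin n) (hmin : ∀ j ∈ S, ℓ i ≤ ℓ j) :
    (S.filter fun j => LinAdj k ℓ i j ∧ j < i).card ≤ k + 1 := by
  by_contra h
  push_neg at h
  set T := S.filter fun j => LinAdj k ℓ i j ∧ j < i with hT
  have hTne : T.Nonempty := card_pos.mp (by omega)
  set j := T.min' hTne with hj
  have hjT : j ∈ T := T.min'_mem hTne
  rw [hT, mem_filter] at hjT
  obtain ⟨hjS, ⟨hij, hcnt⟩, hlt⟩ := hjT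
  have hsub : T.erase j ⊆ univ.filter fun t =>
      min i j < t ∧ t < max i j ∧ min (ℓ i) (ℓ j) < ℓ t := by
    intro t ht
    rw [mem_erase] at ht
    obtain ⟨htj, htT⟩ := ht
    rw [hT, mem_filter] at htT
    obtain ⟨htS, ⟨hti, _⟩, hit⟩ := htT
    have htgej : j ≤ t := T.min'_le t (by rw [hT, mem_filter]; exact ⟨htS, ⟨hti, ‹_›⟩, hit⟩)
    rw [mem_filter]
    refine ⟨mem_univ _, ?_, ?_, ?_⟩
    · rw [min_eq_right hlt.le]; exact lt_of_le_of_ne htgej (Ne.symm htj)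
    · rw [max_eq_left hlt.le]; exact hit
    · rw [min_eq_left (hmin j hjS)]
      exact lt_of_le_of_ne (hmin t htS) (fun heq => (ne_of_gt hit) (hinj heq))
  have hc := card_le_card hsub
  rw [card_erase_of_mem (T.min'_mem hTne)] at hc
  unfold btwCount at hcnt
  omega

lemma main_bound (k : ℕ) (ℓ : Fin n → ℝ) (hinj : Function.Injective ℓ)
    (S : Finset (Fin n)) (i : Fin n) (hmin : ∀ j ∈ S, ℓ i ≤ ℓ j) :
    (S.filter fun j => LinAdj k ℓ i j).card ≤ 2 * k + 2 := by
  have hsub : (S.filter fun j => LinAdj k ℓ i j) ⊆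
      (S.filter fun j => LinAdj k ℓ i j ∧ i < j) ∪
      (S.filter fun j => LinAdj k ℓ i j ∧ j < i) := by
    intro t ht
    rw [mem_filter] at ht
    rcases lt_or_gt_of_ne ht.2.1 with h | h
    · exact mem_union_left _ (mem_filter.mpr ⟨ht.1, ht.2, h⟩)
    · exact mem_union_right _ (mem_filter.mpr ⟨ht.1, ht.2, h⟩)
  calc (S.filter fun j => LinAdj k ℓ i j).card
      ≤ _ := card_le_card hsub
    _ ≤ _ := card_union_le _ _
    _ ≤ (k + 1) + (k + 1) :=
        Nat.add_le_add (right_le k ℓ hinj S i hmin) (left_le k ℓ hinj S i hmin)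
    _ = 2 * k + 2 := by ring

/-- in a linear semi-bar `k`-visibility representation with distinct lengths,
the shortest bar of any nonempty set `S` is visible to at most `2k+2` bars of `S`;
consequently such graphs are `(2k+2)`-degenerate. -/
theorem stmt16 (k : ℕ) (ℓ : Fin n → ℝ) (hinj : Function.Injective ℓ) :
    (∀ S : Finset (Fin n), S.Nonempty → ∀ i ∈ S, (∀ j ∈ S, ℓ i ≤ ℓ j) →
      (S.filter fun j => LinAdj k ℓ i j).card ≤ 2 * k + 2) ∧
    (∀ S : Finset (Fin n), S.Nonempty →
      ∃ i ∈ S, (S.filter fun j => LinAdj k ℓ i j).card ≤ 2 * k + 2) := by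
  constructor
  · intro S _ i _ hmin
    exact main_bound k ℓ hinj S i hmin
  · intro S hS
    obtain ⟨i, hiS, hmin⟩ := S.exists_min_image ℓ hS
    exact ⟨i, hiS, main_bound k ℓ hinj S i hmin⟩
end
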